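/- arXiv:2402.16838 — 12 statements merged into one kernel-verified Lean document; each statement's English description precedes it below -/
import Mathlib

section
/- The sets of ℤ^d-Bohr recurrence have the Ramsey property: if R ⊆ ℤ^d is a set of ℤ^d-Bohr recurrence and R = A ∪ B, then A is a set of ℤ^d-Bohr recurrence or B is a set of ℤ^d-Bohr recurrence. -/
open scoped BigOperators

noncomputable section

/-- Distance from a real number to the nearest integer. -/
def torusNorm (x : ℝ) : ℝ := |x - round x|

/-- A subset `V ⊆ ℤ^d` is a Bohr₀ set if there are `k ≥ 1`, vectors `α₁, …, α_k ∈ ℝ^d`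
and `ε > 0` such that every `n ∈ ℤ^d` with `‖n·αⱼ‖_𝕋 < ε` for all `j` belongs to `V`. -/
def IsBohr0 (d : ℕ) (V : Set (Fin d → ℤ)) : Prop :=
  ∃ k : ℕ, 1 ≤ k ∧ ∃ α : Fin k → Fin d → ℝ, ∃ ε : ℝ, 0 < ε ∧
    ∀ n : Fin d → ℤ, (∀ j : Fin k, torusNorm (∑ i, (n i : ℝ) * α j i) < ε) → n ∈ V

/-- `R ⊆ ℤ^d` is a set of `ℤ^d`-Bohr recurrence if it meets every Bohr₀ set. -/
def IsBohrRecurrence (d : ℕ) (R : Set (Fin d → ℤ)) : Prop :=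
  ∀ V : Set (Fin d → ℤ), IsBohr0 d V → (R ∩ V).Nonempty

/-- Intersection of two Bohr₀ sets is a Bohr₀ set. -/
lemma IsBohr0.inter {d : ℕ} {V W : Set (Fin d → ℤ)}
    (hV : IsBohr0 d V) (hW : IsBohr0 d W) : IsBohr0 d (V ∩ W) := by
  obtain ⟨k₁, hk₁, α₁, ε₁, hε₁, h₁⟩ := hV
  obtain ⟨k₂, hk₂, α₂, ε₂, hε₂, h₂⟩ := hW
  refine ⟨k₁ + k₂, le_trans hk₁ (Nat.le_add_right _ _),
    Fin.append α₁ α₂, min ε₁ ε₂, lt_min hε₁ hε₂, fun n hn => ?_⟩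
  constructor
  · apply h₁ n
    intro j
    have := hn (Fin.castAdd k₂ j)
    rw [Fin.append_left] at this
    exact lt_of_lt_of_le this (min_le_left _ _)
  · apply h₂ n
    intro j
    have := hn (Fin.natAdd k₁ j)
    rw [Fin.append_right] at this
    exact lt_of_lt_of_le this (min_le_right _ _)

/-- The sets of `ℤ^d`-Bohr recurrence have the Ramsey property. -/
theorem bohr_recurrence_ramsey_property
    (d : ℕ) (R A B : Set (Fin d → ℤ))
    (hR : IsBohrRecurrence d R) (hAB : R = A ∪ B) :
    IsBohrRecurrence d A ∨ IsBohrRecurrence d B := by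
  by_contra h
  push_neg at h
  obtain ⟨hA, hB⟩ := h
  simp only [IsBohrRecurrence, not_forall] at hA hB
  obtain ⟨V, hV, hAV⟩ := hA
  obtain ⟨W, hW, hBW⟩ := hB
  obtain ⟨n, hnR, hnV, hnW⟩ := hR (V ∩ W) (hV.inter hW)
  rw [hAB] at hnR
  rw [Set.not_nonempty_iff_eq_empty] at hAV hBW
  cases hnR with
  | inl h => exact Set.eq_empty_iff_forall_notMem.mp hAV n ⟨h, hnV⟩
  | inr h => exact Set.eq_empty_iff_forall_notMem.mp hBW n ⟨h, hnW⟩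
end
end

section
/- Let X be a compact Hausdorff abelian topological group, φ : ℤ^d → X a group homomorphism (defining the rotation action n·y = φ(n) + y), x ∈ X, and U ⊆ X an open neighborhood of x. Then N(x,U) = {n ∈ ℤ^d : φ(n) + x ∈ U} is a Bohr₀ set of ℤ^d. -/
/-!
The return times contain `A - A + A - A` for `A = φ⁻¹' W`, `W` a small neighbourhood of `0`, and
compactness of `X` makes `A` syndetic. Reducing a large box modulo `M` turns `A` into a subset `B`
of `(ℤ/M)^d` of density bounded below independently of the box. Bogolyubov's argument then puts a
Bohr set of boundedly many characters inside `B - B + B - B`: the fourth moment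
`∑ ψ, |B̂ ψ|⁴ ψ z` counts the representations `z = a - b + c - e`, and it is positive as soon as
`Re ψ z ≥ 0` on the large spectrum. The frequencies of these characters lie in a compact cube, so
along a subsequence of box sizes they converge to one Bohr set that works on all of `ℤ^d`.
-/

open scoped BigOperators

noncomputable section

open Finset Filter Topology
open scoped Pointwise Real

theorem torusNorm_le_add_abs_sub (x y : ℝ) : torusNorm y ≤ torusNorm x + |y - x| :=
  calc torusNorm y ≤ |y - round x| := round_le y (round x)
    _ = |(x - round x) + (y - x)| := by ring_nf
    _ ≤ torusNorm x + |y - x| := abs_add_le _ _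

theorem cos_two_pi_mul_nonneg_of_torusNorm_le {t : ℝ} (ht : torusNorm t ≤ 1 / 4) :
    0 ≤ Real.cos (2 * π * t) := by
  have hper : 2 * π * t = 2 * π * (t - round t) + round t * (2 * π) := by ring
  rw [hper, Real.cos_add_int_mul_two_pi]
  obtain ⟨hlo, hhi⟩ := abs_le.1 ht
  apply Real.cos_nonneg_of_mem_Icc
  constructor <;> nlinarith [Real.pi_pos]

namespace AddChar

theorem map_sum_eq_prod {A M ι : Type*} [AddCommMonoid A] [CommMonoid M] (ψ : AddChar A M)
    (s : Finset ι) (f : ι → A) : ψ (∑ i ∈ s, f i) = ∏ i ∈ s, ψ (f i) := by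
  induction s using Finset.cons_induction with
  | empty => simp
  | cons a s ha ih => rw [sum_cons, prod_cons, map_add_eq_mul, ih]

section FiniteGroup

variable {G : Type*} [AddCommGroup G] [Fintype G]

theorem sum_sum_apply [DecidableEq G] {ι : Type*} (s : Finset ι) (f : ι → G) :
    ∑ ψ : AddChar G ℂ, ∑ i ∈ s, ψ (f i) = Fintype.card G * #{i ∈ s | f i = 0} := by
  rw [sum_comm]
  simp only [sum_apply_eq_ite, sum_ite, sum_const_zero, add_zero, sum_const, nsmul_eq_mul]
  ring

theorem ofReal_norm_sum_sq (B : Finset G) (ψ : AddChar G ℂ) :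
    ((‖∑ x ∈ B, ψ x‖ ^ 2 : ℝ) : ℂ) = ∑ p ∈ B ×ˢ B, ψ (p.1 - p.2) := by
  rw [Complex.ofReal_pow, ← Complex.mul_conj', map_sum, sum_mul_sum, sum_product]
  simp only [← map_neg_eq_conj, ← map_add_eq_mul, sub_eq_add_neg]

theorem sum_norm_sum_sq [DecidableEq G] (B : Finset G) :
    ∑ ψ : AddChar G ℂ, ‖∑ x ∈ B, ψ x‖ ^ 2 = Fintype.card G * #B := by
  have h := sum_sum_apply (G := G) (B ×ˢ B) (fun p => p.1 - p.2)
  have hdiag : {p ∈ B ×ˢ B | p.1 - p.2 = 0} = B.diag := by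
    ext ⟨a, b⟩
    simp only [mem_filter, mem_product, mem_diag, sub_eq_zero]
    constructor
    · rintro ⟨⟨ha, -⟩, rfl⟩; exact ⟨ha, rfl⟩
    · rintro ⟨ha, rfl⟩; exact ⟨⟨ha, ha⟩, rfl⟩
  simp only [← ofReal_norm_sum_sq, hdiag, diag_card] at h
  exact_mod_cast h

theorem sum_norm_sum_pow_four_mul_re_eq_zero [DecidableEq G] {B : Finset G} {z : G}
    (hz : z ∉ B - B + B - B) :
    ∑ ψ : AddChar G ℂ, ‖∑ x ∈ B, ψ x‖ ^ 4 * (ψ z).re = 0 := by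
  have h := sum_sum_apply (G := G) ((B ×ˢ B) ×ˢ (B ×ˢ B))
    (fun p => p.1.1 - p.1.2 + (p.2.1 - p.2.2) + z)
  have hempty : {p ∈ (B ×ˢ B) ×ˢ (B ×ˢ B) | p.1.1 - p.1.2 + (p.2.1 - p.2.2) + z = 0} = ∅ := by
    refine filter_eq_empty_iff.2 fun ⟨⟨a, b⟩, c, e⟩ hp hzero => hz ?_
    simp only [mem_product] at hp
    rw [eq_of_sub_eq_zero (show z - (b - a + e - c) = 0 by rw [← hzero]; abel)]
    exact sub_mem_sub (add_mem_add (sub_mem_sub hp.1.2 hp.1.1) hp.2.2) hp.2.1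
  have hterm : ∀ ψ : AddChar G ℂ, ((‖∑ x ∈ B, ψ x‖ ^ 4 : ℝ) : ℂ) * ψ z =
      ∑ p ∈ (B ×ˢ B) ×ˢ (B ×ˢ B), ψ (p.1.1 - p.1.2 + (p.2.1 - p.2.2) + z) := by
    intro ψ
    rw [show ‖∑ x ∈ B, ψ x‖ ^ 4 = ‖∑ x ∈ B, ψ x‖ ^ 2 * ‖∑ x ∈ B, ψ x‖ ^ 2 by ring,
      Complex.ofReal_mul, ofReal_norm_sum_sq, sum_mul_sum, sum_product (s := B ×ˢ B)]
    simp only [sum_mul, map_add_eq_mul]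
  simp only [← hterm, hempty, card_empty, Nat.cast_zero, mul_zero] at h
  simpa only [Complex.re_sum, Complex.re_ofReal_mul, Complex.zero_re] using congrArg Complex.re h

def largeSpectrum (B : Finset G) (c : ℝ) : Finset (AddChar G ℂ) :=
  {ψ | c ≤ ‖∑ x ∈ B, ψ x‖ ^ 2}

theorem mul_card_largeSpectrum_le [DecidableEq G] (B : Finset G) (c : ℝ) :
    c * #(largeSpectrum B c) ≤ Fintype.card G * #B := by
  rw [← sum_norm_sum_sq, mul_comm, ← nsmul_eq_mul]
  exact (card_nsmul_le_sum _ _ c fun ψ hψ => (mem_filter.1 hψ).2).trans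
    (sum_le_sum_of_subset_of_nonneg (subset_univ _) fun ψ _ _ => by positivity)

theorem mem_sub_add_sub_of_re_nonneg [DecidableEq G] {B : Finset G} {c : ℝ} (hc : 0 ≤ c)
    (hcB : c * (Fintype.card G * #B) < #B ^ 4) {z : G}
    (hz : ∀ ψ ∈ largeSpectrum B c, 0 ≤ (ψ z).re) : z ∈ B - B + B - B := by
  set q : AddChar G ℂ → ℝ := fun ψ => ‖∑ x ∈ B, ψ x‖ ^ 2
  -- If `z ∉ B - B + B - B` the fourth moment vanishes, yet every term of
  -- `∑ ψ, (q ψ ^ 2 * Re ψ z + c * q ψ)` is nonnegative (off the large spectrum because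
  -- `q ψ < c`), and the trivial character alone contributes `#B ^ 4`.
  by_contra hzB
  have hterm : ∀ ψ : AddChar G ℂ, 0 ≤ q ψ ^ 2 * (ψ z).re + c * q ψ := by
    intro ψ
    by_cases hψ : c ≤ q ψ
    · have hre : 0 ≤ (ψ z).re := hz ψ (mem_filter.2 ⟨mem_univ ψ, hψ⟩)
      positivity
    · have hre : -1 ≤ (ψ z).re :=
        neg_le_of_abs_le ((Complex.abs_re_le_norm _).trans (ψ.norm_apply z).le)
      nlinarith [sq_nonneg ‖∑ x ∈ B, ψ x‖]
  have hzero : ∑ ψ, q ψ ^ 2 * (ψ z).re = 0 := by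
    simpa only [q, ← pow_mul] using sum_norm_sum_pow_four_mul_re_eq_zero hzB
  have hq0 : q 0 = (#B : ℝ) ^ 2 := by simp [q]
  have hlow : (#B : ℝ) ^ 4 ≤ c * (Fintype.card G * #B) :=
    calc (#B : ℝ) ^ 4 ≤ q 0 ^ 2 * ((0 : AddChar G ℂ) z).re + c * q 0 := by
          rw [hq0, AddChar.zero_apply, Complex.one_re, mul_one, ← pow_mul]
          exact le_add_of_nonneg_right (by positivity)
      _ ≤ ∑ ψ, (q ψ ^ 2 * (ψ z).re + c * q ψ) := single_le_sum (fun ψ _ => hterm ψ) (mem_univ 0)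
      _ = c * (Fintype.card G * #B) := by
          rw [sum_add_distrib, ← mul_sum, sum_norm_sum_sq, hzero, zero_add]
  exact hcB.not_ge hlow

theorem exists_bohr_subset_sub_add_sub [DecidableEq G] (B : Finset G) {δ : ℝ} (hδ : 0 < δ)
    (hB : δ * Fintype.card G ≤ #B) :
    ∃ S : Finset (AddChar G ℂ), (#S : ℝ) ≤ 2 / δ ^ 2 ∧
      ∀ z, (∀ ψ ∈ S, 0 ≤ (ψ z).re) → z ∈ B - B + B - B := by
  set T : ℝ := (#B : ℝ)
  have hT : 0 < T := (mul_pos hδ (by exact_mod_cast Fintype.card_pos)).trans_le hB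
  have hcard := mul_card_largeSpectrum_le B (δ / 2 * T ^ 2)
  refine ⟨largeSpectrum B (δ / 2 * T ^ 2), ?_,
    fun z => mem_sub_add_sub_of_re_nonneg (by positivity) ?_⟩
  · rw [le_div_iff₀ (by positivity)]
    refine le_of_mul_le_mul_right ?_ hT
    nlinarith
  · nlinarith [pow_pos hT 3]

end FiniteGroup

theorem exists_eq_exp_of_norm_eq_one {d : ℕ} (ψ : AddChar (Fin d → ℤ) ℂ)
    (hψ : ∀ n, ‖ψ n‖ = 1) :
    ∃ α : Fin d → ℝ, ‖α‖ ≤ 1 / 2 ∧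
      ∀ n, ψ n = Complex.exp (↑(2 * π * ∑ i, (n i : ℝ) * α i) * Complex.I) := by
  set θ : Fin d → ℝ := fun i => Complex.arg (ψ (Pi.single i 1))
  refine ⟨fun i => θ i / (2 * π), ?_, fun n => ?_⟩
  · refine (pi_norm_le_iff_of_nonneg (by norm_num)).2 fun i => ?_
    rw [Real.norm_eq_abs, abs_div, abs_of_pos Real.two_pi_pos, div_le_iff₀ Real.two_pi_pos]
    linarith [Complex.abs_arg_le_pi (ψ (Pi.single i 1))]
  have hsingle : ∀ i, ψ (Pi.single i 1) = Complex.exp (θ i * Complex.I) := fun i => by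
    simpa [hψ] using (Complex.norm_mul_exp_arg_mul_I (ψ (Pi.single i 1))).symm
  have hn : n = ∑ i, n i • Pi.single i 1 := by ext j; simp [Pi.single_apply]
  calc ψ n = ∏ i, ψ (Pi.single i 1) ^ n i := by
        conv_lhs => rw [hn]
        simp only [map_sum_eq_prod, map_zsmul_eq_zpow]
    _ = ∏ i, Complex.exp (n i * (θ i * Complex.I)) := by simp only [hsingle, Complex.exp_int_mul]
    _ = _ := by
        rw [← Complex.exp_sum]
        congr 1
        push_cast
        rw [mul_sum, sum_mul]
        refine sum_congr rfl fun i _ => ?_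
        field_simp

end AddChar

theorem Finset.exists_fin_subset_range {α : Type*} [Nonempty α] (s : Finset α) {K : ℕ}
    (h : #s ≤ K) : ∃ f : Fin K → α, ↑s ⊆ Set.range f := by
  refine ⟨Function.extend (Fin.castLE h) (fun i => (s.equivFin.symm i : α))
    (fun _ => Classical.arbitrary α), fun a ha => ⟨Fin.castLE h (s.equivFin ⟨a, ha⟩), ?_⟩⟩
  rw [(Fin.castLE_injective h).extend_apply, Equiv.symm_apply_apply]

theorem eq_of_intCast_zmod_eq {ι : Type*} {M : ℕ} {v w : ι → ℤ}
    (h : ∀ i, (v i : ZMod M) = w i) (hvw : ∀ i, |v i - w i| < M) : v = w :=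
  funext fun i => sub_eq_zero.1 <| Int.eq_zero_of_abs_lt_dvd
    ((ZMod.intCast_eq_intCast_iff_dvd_sub _ _ _).1 (h i).symm) (hvw i)

theorem exists_box_bohr_subset_sub_add_sub_of_dense {d L K : ℕ} (hL : 0 < L)
    (B : Finset (Fin d → ℤ)) (hB : ∀ a ∈ B, ∀ i, a i ∈ Set.Ico 0 (L : ℤ)) {δ : ℝ} (hδ : 0 < δ)
    (hdens : δ * (3 * L) ^ d ≤ #B) (hK : 2 / δ ^ 2 ≤ K) :
    ∃ α : Fin K → Fin d → ℝ, ‖α‖ ≤ 1 / 2 ∧ ∀ n : Fin d → ℤ, (∀ i, |n i| < L) →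
      (∀ j, torusNorm (∑ i, (n i : ℝ) * α j i) ≤ 1 / 4) → n ∈ B - B + B - B := by
  -- `a - b + c - e - n` has coordinates in `(-3L, 3L)`, where reduction mod `3L` is injective.
  set M := 3 * L
  have : NeZero M := ⟨by omega⟩
  set ι : (Fin d → ℤ) →+ (Fin d → ZMod M) :=
    AddMonoidHom.compLeft (Int.castAddHom (ZMod M)) (Fin d)
  have hι : ∀ v w, ι v = ι w → (∀ i, |v i - w i| < M) → v = w :=
    fun v w h => eq_of_intCast_zmod_eq fun i => congrFun h i
  have hdens' : δ * Fintype.card (Fin d → ZMod M) ≤ #(B.image ι) := by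
    rw [card_image_of_injOn fun a ha b hb hab => hι a b hab fun i => ?_]
    · simpa [M] using hdens
    have := hB a ha i
    have := hB b hb i
    simp only [Set.mem_Ico] at *
    rw [abs_lt]
    omega
  obtain ⟨S, hScard, hS⟩ := AddChar.exists_bohr_subset_sub_add_sub (B.image ι) hδ hdens'
  obtain ⟨ψ, hψ⟩ := S.exists_fin_subset_range (K := K) (by exact_mod_cast hScard.trans hK)
  choose α hα hαψ using fun j =>
    ((ψ j).compAddMonoidHom ι).exists_eq_exp_of_norm_eq_one fun n => (ψ j).norm_apply (ι n)
  refine ⟨α, (pi_norm_le_iff_of_nonneg (by norm_num)).2 hα, fun n hn hbohr => ?_⟩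
  have hre : ∀ χ ∈ S, 0 ≤ (χ (ι n)).re := by
    intro χ hχ
    obtain ⟨j, rfl⟩ := hψ hχ
    rw [← AddChar.compAddMonoidHom_apply, hαψ j n, Complex.exp_ofReal_mul_I_re]
    exact cos_two_pi_mul_nonneg_of_torusNorm_le (hbohr j)
  have h := hS (ι n) hre
  simp only [Finset.mem_sub, Finset.mem_add, Finset.mem_image] at h
  obtain ⟨_, ⟨_, ⟨_, ⟨a, ha, rfl⟩, _, ⟨b, hb, rfl⟩, rfl⟩, _, ⟨c, hc, rfl⟩, rfl⟩, _, ⟨e, he, rfl⟩,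
    hsum⟩ := h
  obtain rfl : a - b + c - e = n := hι _ _ (by simpa using hsum) fun i => by
    have := hB a ha i
    have := hB b hb i
    have := hB c hc i
    have := hB e he i
    have := hn i
    simp only [Set.mem_Ico, Pi.sub_apply, Pi.add_apply, abs_lt] at *
    omega
  exact sub_mem_sub (add_mem_add (sub_mem_sub ha hb) hc) he

def IsSyndetic {G : Type*} [AddGroup G] (A : Set G) : Prop :=
  ∃ F : Finset G, ∀ n, ∃ m ∈ F, n - m ∈ A

theorem pow_le_card_mul_card_filter_box {d : ℕ} (A : Set (Fin d → ℤ)) [DecidablePred (· ∈ A)]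
    (F : Finset (Fin d → ℤ)) {b : ℕ} (hFb : ∀ m ∈ F, ∀ i, |m i| ≤ b)
    (hF : ∀ n, ∃ m ∈ F, n - m ∈ A) (P : ℕ) :
    P ^ d ≤ #F * #{a ∈ Fintype.piFinset fun _ : Fin d => Ico (0 : ℤ) (P + 2 * b) | a ∈ A} := by
  set box := Fintype.piFinset fun _ : Fin d => Ico (b : ℤ) (b + P)
  have hbox : #box = P ^ d := by simp [box, Fintype.card_piFinset]
  calc P ^ d = #box := hbox.symm
    _ ≤ #(F + {a ∈ Fintype.piFinset fun _ : Fin d => Ico (0 : ℤ) (P + 2 * b) | a ∈ A}) := by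
        refine card_le_card fun n hn => ?_
        obtain ⟨m, hm, hnm⟩ := hF n
        refine mem_add.2 ⟨m, hm, n - m, mem_filter.2 ⟨Fintype.mem_piFinset.2 fun i => ?_, hnm⟩,
          add_sub_cancel m n⟩
        have := Fintype.mem_piFinset.1 hn i
        have := abs_le.1 (hFb m hm i)
        simp only [mem_Ico, Pi.sub_apply] at *
        omega
    _ ≤ _ := card_add_le

theorem IsSyndetic.exists_box_bohr_subset_sub_add_sub {d : ℕ} {A : Set (Fin d → ℤ)}
    (hA : IsSyndetic A) :
    ∃ K : ℕ, 1 ≤ K ∧ ∀ N : ℕ, ∃ α : Fin K → Fin d → ℝ, ‖α‖ ≤ 1 ∧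
      ∀ n : Fin d → ℤ, (∀ i, |n i| < N) →
        (∀ j, torusNorm (∑ i, (n i : ℝ) * α j i) ≤ 1 / 4) → n ∈ A - A + A - A := by
  classical
  obtain ⟨F, hF⟩ := hA
  obtain ⟨b, hb⟩ : ∃ b : ℕ, ∀ m ∈ F, ∀ i, |m i| ≤ b := by
    refine ⟨F.sup fun m => univ.sup fun i => (m i).natAbs, fun m hm i => ?_⟩
    rw [Int.abs_eq_natAbs, Nat.cast_le]
    exact (le_sup (f := fun i => (m i).natAbs) (mem_univ i)).trans
      (le_sup (f := fun m => univ.sup fun i => (m i).natAbs) hm)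
  have hFpos : 0 < #F := card_pos.2 <| let ⟨m, hm, _⟩ := hF 0; ⟨m, hm⟩
  -- `A` has density at least `δ = 1 / (#F * 6 ^ d)` in a box of side `P + 2b` reduced mod
  -- `3 (P + 2b)`, whatever `N`, so `K = 2 / δ ^ 2` characters suffice at every scale.
  refine ⟨2 * (#F * 6 ^ d) ^ 2, Nat.one_le_iff_ne_zero.2 (by positivity), fun N => ?_⟩
  set P := N + 2 * b + 1
  set B := {a ∈ Fintype.piFinset fun _ : Fin d => Ico (0 : ℤ) (P + 2 * b) | a ∈ A}
  have hcount := pow_le_card_mul_card_filter_box A F hb hF P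
  set δ : ℝ := 1 / (#F * 6 ^ d)
  have hδ : 0 < δ := by simp only [δ]; positivity
  have hdens : δ * (3 * (P + 2 * b : ℕ)) ^ d ≤ #B := by
    have hbox : ((3 * (P + 2 * b : ℕ)) : ℝ) ^ d ≤ 6 ^ d * P ^ d := by
      rw [← mul_pow]
      refine pow_le_pow_left₀ (by positivity) ?_ d
      push_cast
      linarith [show (2 * b : ℝ) ≤ P by simp only [P]; push_cast; linarith]
    rw [div_mul_eq_mul_div, one_mul, div_le_iff₀ (by positivity)]
    calc _ ≤ (6 : ℝ) ^ d * P ^ d := hbox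
      _ ≤ 6 ^ d * (#F * #B) := by gcongr; exact_mod_cast hcount
      _ = _ := by ring
  obtain ⟨α, hα, hαB⟩ := exists_box_bohr_subset_sub_add_sub_of_dense (L := P + 2 * b)
    (K := 2 * (#F * 6 ^ d) ^ 2) (by omega) B
    (fun a ha i => by simpa using Fintype.mem_piFinset.1 (mem_filter.1 ha).1 i) hδ
    (by exact_mod_cast hdens) (le_of_eq (by simp only [δ]; push_cast; field_simp))
  refine ⟨α, hα.trans (by norm_num), fun n hn hbohr => ?_⟩
  have hBA : (B : Set (Fin d → ℤ)) ⊆ A := fun a ha => (mem_filter.1 ha).2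
  have hnB := hαB n (fun i => (hn i).trans_le (by omega)) hbohr
  rw [← mem_coe, coe_sub, coe_add, coe_sub] at hnB
  exact (by gcongr : (B : Set (Fin d → ℤ)) - B + B - B ⊆ A - A + A - A) hnB

theorem IsBohr0.mono {d : ℕ} {V W : Set (Fin d → ℤ)} (hV : IsBohr0 d V) (hVW : V ⊆ W) :
    IsBohr0 d W :=
  let ⟨k, hk, α, ε, hε, h⟩ := hV
  ⟨k, hk, α, ε, hε, fun n hn => hVW (h n hn)⟩

theorem isBohr0_of_forall_box {d K : ℕ} {V : Set (Fin d → ℤ)} (hK : 1 ≤ K)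
    (h : ∀ N : ℕ, ∃ α : Fin K → Fin d → ℝ, ‖α‖ ≤ 1 ∧ ∀ n : Fin d → ℤ, (∀ i, |n i| < N) →
      (∀ j, torusNorm (∑ i, (n i : ℝ) * α j i) ≤ 1 / 4) → n ∈ V) :
    IsBohr0 d V := by
  choose β hβ hβV using h
  obtain ⟨a, -, σ, hσ, hlim⟩ := (isCompact_closedBall (0 : Fin K → Fin d → ℝ) 1).tendsto_subseq
    fun N => mem_closedBall_zero_iff.2 (hβ N)
  refine ⟨K, hK, a, 1 / 8, by norm_num, fun n hn => ?_⟩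
  have hclose : ∀ᶠ l in atTop, ∀ j,
      |∑ i, (n i : ℝ) * β (σ l) j i - ∑ i, (n i : ℝ) * a j i| < 1 / 8 := by
    refine eventually_all.2 fun j => ?_
    have hcont : Continuous fun α : Fin K → Fin d → ℝ => ∑ i, (n i : ℝ) * α j i := by fun_prop
    simpa only [Real.dist_eq, Function.comp_apply] using
      ((hcont.tendsto a).comp hlim).eventually (Metric.ball_mem_nhds _ (by norm_num))
  have hlarge : ∀ᶠ l in atTop, ∀ i, |n i| < σ l := eventually_all.2 fun i =>
    (hσ.tendsto_atTop.eventually_gt_atTop (n i).natAbs).mono fun l hl => by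
      rw [Int.abs_eq_natAbs]; exact_mod_cast hl
  obtain ⟨l, hl, hl'⟩ := (hclose.and hlarge).exists
  refine hβV (σ l) n hl' fun j => ?_
  calc _ ≤ torusNorm (∑ i, (n i : ℝ) * a j i) +
          |∑ i, (n i : ℝ) * β (σ l) j i - ∑ i, (n i : ℝ) * a j i| :=
        torusNorm_le_add_abs_sub _ _
    _ ≤ 1 / 8 + 1 / 8 := add_le_add (hn j).le (hl j).le
    _ = 1 / 4 := by norm_num

theorem IsSyndetic.isBohr0_sub_add_sub {d : ℕ} {A : Set (Fin d → ℤ)} (hA : IsSyndetic A) :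
    IsBohr0 d (A - A + A - A) :=
  let ⟨_, hK, h⟩ := hA.exists_box_bohr_subset_sub_add_sub
  isBohr0_of_forall_box hK h

theorem AddMonoidHom.isSyndetic_preimage {H X : Type*} [AddGroup H] [TopologicalSpace X]
    [AddGroup X] [IsTopologicalAddGroup X] [CompactSpace X] (φ : H →+ X) {W : Set X}
    (hW : W ∈ 𝓝 0) : IsSyndetic (φ ⁻¹' W) := by
  have hcover : closure (Set.range φ) ⊆ ⋃ m, (· - φ m) ⁻¹' interior W := by
    intro y hy
    have hnhds : (y - ·) ⁻¹' interior W ∈ 𝓝 y :=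
      (continuous_const.sub continuous_id).continuousAt.preimage_mem_nhds
        (isOpen_interior.mem_nhds (by simpa using mem_interior_iff_mem_nhds.2 hW))
    obtain ⟨_, hz, m, rfl⟩ := mem_closure_iff_nhds.1 hy _ hnhds
    exact Set.mem_iUnion.2 ⟨m, hz⟩
  obtain ⟨F, hF⟩ := isClosed_closure.isCompact.elim_finite_subcover _
    (fun m => isOpen_interior.preimage (continuous_sub_right (φ m))) hcover
  refine ⟨F, fun n => ?_⟩
  obtain ⟨m, hm, hnm⟩ := Set.mem_iUnion₂.1 (hF (subset_closure ⟨n, rfl⟩))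
  exact ⟨m, hm, by rw [Set.mem_preimage, map_sub]; exact interior_subset hnm⟩

theorem exists_nhds_zero_sub_add_sub_subset {X : Type*} [TopologicalSpace X] [AddGroup X]
    [IsTopologicalAddGroup X] {U : Set X} (hU : U ∈ 𝓝 0) : ∃ V ∈ 𝓝 0, V - V + V - V ⊆ U := by
  obtain ⟨V₁, hV₁, -, -, hV₁U⟩ := exists_closed_nhds_zero_neg_eq_add_subset hU
  obtain ⟨V, hV, -, hneg, hVV₁⟩ := exists_closed_nhds_zero_neg_eq_add_subset hV₁
  have hsub : V - V ⊆ V₁ := by rwa [sub_eq_add_neg, hneg]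
  refine ⟨V, hV, ?_⟩
  calc V - V + V - V = (V - V) + (V - V) := add_sub_assoc _ _ _
    _ ⊆ V₁ + V₁ := Set.add_subset_add hsub hsub
    _ ⊆ U := hV₁U

theorem return_times_of_rotation_isBohr0_general
    (d : ℕ) (X : Type*) [TopologicalSpace X] [AddCommGroup X] [IsTopologicalAddGroup X]
    [CompactSpace X]
    (φ : (Fin d → ℤ) →+ X) (x : X) (U : Set X) (hU : IsOpen U) (hxU : x ∈ U) :
    IsBohr0 d {n : Fin d → ℤ | φ n + x ∈ U} := by
  have hU₀ : (· + x) ⁻¹' U ∈ 𝓝 (0 : X) :=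
    (continuous_add_const x).continuousAt.preimage_mem_nhds (by simpa using hU.mem_nhds hxU)
  obtain ⟨W, hW, hWU⟩ := exists_nhds_zero_sub_add_sub_subset hU₀
  refine (φ.isSyndetic_preimage hW).isBohr0_sub_add_sub.mono fun n hn => hWU ?_
  obtain ⟨_, ⟨_, ⟨a, ha, b, hb, rfl⟩, c, hc, rfl⟩, e, he, rfl⟩ := hn
  rw [map_sub, map_add, map_sub]
  exact Set.sub_mem_sub (Set.add_mem_add (Set.sub_mem_sub ha hb) hc) he

/-- For a rotation of a compact Hausdorff abelian group `X` by a homomorphism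
`φ : ℤ^d → X`, the set of return times `N(x, U) = {n : φ(n) + x ∈ U}` of a point `x`
to an open neighborhood `U` of `x` is a Bohr₀ set. -/
theorem return_times_of_rotation_isBohr0
    (d : ℕ) (X : Type*) [TopologicalSpace X] [AddCommGroup X] [IsTopologicalAddGroup X]
    [CompactSpace X] [T2Space X]
    (φ : (Fin d → ℤ) →+ X) (x : X) (U : Set X) (hU : IsOpen U) (hxU : x ∈ U) :
    IsBohr0 d {n : Fin d → ℤ | φ n + x ∈ U} :=
  return_times_of_rotation_isBohr0_general d X φ x U hU hxU
end
end

section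
/- Let π : (X, T₁,…,T_d) → (Y, S₁,…,S_d) be a proximal extension between minimal ℤ^d-systems, and let R ⊆ ℤ^d be a set of recurrence for (Y, S₁,…,S_d). Then R is a set of recurrence for (X, T₁,…,T_d). -/
open scoped BigOperators

noncomputable section

/-- The composition `T₁^{n₁} ∘ ⋯ ∘ T_d^{n_d}`. -/
def zpowProd {X : Type*} {d : ℕ} (T : Fin d → Equiv.Perm X) (n : Fin d → ℤ) :
    Equiv.Perm X :=
  (List.ofFn fun i => T i ^ n i).prod

/-- `R ⊆ ℤ^d` is a set of recurrence for the system given by the commuting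
homeomorphisms `T₁, …, T_d`: for every nonempty open `U` there is `n ∈ R` with
`U ∩ T₁^{-n₁}⋯T_d^{-n_d} U ≠ ∅`. -/
def IsRecurrenceSet {X : Type*} [TopologicalSpace X] {d : ℕ}
    (T : Fin d → Equiv.Perm X) (R : Set (Fin d → ℤ)) : Prop :=
  ∀ U : Set X, IsOpen U → U.Nonempty → ∃ n ∈ R, (U ∩ zpowProd T (-n) '' U).Nonempty

/-- The system is minimal: every orbit is dense. -/
def IsMinimalSystem {X : Type*} [TopologicalSpace X] {d : ℕ}
    (T : Fin d → Equiv.Perm X) : Prop :=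
  ∀ x : X, Dense (Set.range fun n : Fin d → ℤ => zpowProd T n x)

/-! In a minimal system it suffices to find, for every `δ > 0`, a point `x` and `n ∈ R` with
`dist (Tⁿx) x < δ`: the pairs that some `T^g` moves into `U × U` form a neighbourhood of the
diagonal, so by compactness they contain all pairs at distance `< δ` for some `δ`.
Such `δ`-returns come from `Y`. Being brought `δ`-close by some `T^m` is an open condition on
pairs which, by proximality, holds on each fiber of `π × π`; since `π × π` is a closed map it
holds on all pairs over `V × V` for a neighbourhood `V`. A return of `V` under `Sⁿ` lifts to a
pair `(x, Tⁿx)` over `V × V`, and `T^m x` is then a `δ`-return. -/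

section ZpowProd

variable {X Y : Type*} {d : ℕ} {T : Fin d → Equiv.Perm X}

open IsMulCommutative in
theorem zpowProd_add (hT : ∀ i j, Commute (T i) (T j)) (m n : Fin d → ℤ) :
    zpowProd T (m + n) = zpowProd T m * zpowProd T n := by
  have : IsMulCommutative (Subgroup.closure (Set.range T)) :=
    Subgroup.isMulCommutative_closure (by rintro _ ⟨i, rfl⟩ _ ⟨j, rfl⟩; exact hT i j)
  let t (i : Fin d) : Subgroup.closure (Set.range T) := ⟨T i, Subgroup.subset_closure ⟨i, rfl⟩⟩
  have zpowProd_eq (n : Fin d → ℤ) : zpowProd T n = ↑(∏ i, t i ^ n i) := by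
    rw [← List.prod_ofFn, SubmonoidClass.coe_list_prod]
    simp [zpowProd, List.map_ofFn, Function.comp_def, t]
  simp only [zpowProd_eq, Pi.add_apply, zpow_add, Finset.prod_mul_distrib, Subgroup.coe_mul]

@[simp]
theorem zpowProd_zero : zpowProd T 0 = 1 := by
  simp [zpowProd]

theorem zpowProd_neg (hT : ∀ i j, Commute (T i) (T j)) (n : Fin d → ℤ) :
    zpowProd T (-n) = (zpowProd T n)⁻¹ :=
  eq_inv_of_mul_eq_one_left <| by rw [← zpowProd_add hT, neg_add_cancel, zpowProd_zero]

theorem zpowProd_commute (hT : ∀ i j, Commute (T i) (T j)) (m n : Fin d → ℤ) :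
    Commute (zpowProd T m) (zpowProd T n) := by
  rw [Commute, SemiconjBy, ← zpowProd_add hT, ← zpowProd_add hT, add_comm]

theorem zpowProd_mem {H : Subgroup (Equiv.Perm X)} (hT : ∀ i, T i ∈ H) (n : Fin d → ℤ) :
    zpowProd T n ∈ H :=
  list_prod_mem <| by
    simpa [List.mem_ofFn] using fun i => zpow_mem (hT i) (n i)

theorem prodMk_zpowProd_mem {S : Fin d → Equiv.Perm Y}
    {H : Subgroup (Equiv.Perm X × Equiv.Perm Y)} (hTS : ∀ i, (T i, S i) ∈ H) (n : Fin d → ℤ) : (zpowProd T n, zpowProd S n) ∈ H := by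
  have : (zpowProd T n, zpowProd S n) = (List.ofFn fun i => (T i, S i) ^ n i).prod := by
    ext1
    · simpa [zpowProd, List.map_ofFn, Function.comp_def] using
        (map_list_prod (MonoidHom.fst _ _) (List.ofFn fun i => (T i, S i) ^ n i)).symm
    · simpa [zpowProd, List.map_ofFn, Function.comp_def] using
        (map_list_prod (MonoidHom.snd _ _) (List.ofFn fun i => (T i, S i) ^ n i)).symm
  rw [this]
  exact list_prod_mem <| by
    simpa [List.mem_ofFn] using fun i => zpow_mem (hTS i) (n i)

end ZpowProd

def bicontinuousPerms (X : Type*) [TopologicalSpace X] : Subgroup (Equiv.Perm X) where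
  carrier := {e | Continuous e ∧ Continuous e.symm}
  mul_mem' hf hg := ⟨hf.1.comp hg.1, hg.2.comp hf.2⟩
  one_mem' := ⟨continuous_id, continuous_id⟩
  inv_mem' hf := ⟨hf.2, hf.1⟩

theorem continuous_zpowProd {X : Type*} [TopologicalSpace X] {d : ℕ} {T : Fin d → Equiv.Perm X}
    (hT_cont : ∀ i, Continuous (T i)) (hT_cont_symm : ∀ i, Continuous (T i).symm)
    (n : Fin d → ℤ) : Continuous (zpowProd T n) :=
  (zpowProd_mem (H := bicontinuousPerms X) (fun i => ⟨hT_cont i, hT_cont_symm i⟩) n).1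

def semiconjPerms {X Y : Type*} (π : X → Y) : Subgroup (Equiv.Perm X × Equiv.Perm Y) where
  carrier := {p | ∀ x, π (p.1 x) = p.2 (π x)}
  mul_mem' hp hq x := by simp [hp _, hq _]
  one_mem' x := rfl
  inv_mem' {p} hp x := by
    rw [Prod.fst_inv, Prod.snd_inv, Equiv.Perm.eq_inv_iff_eq, ← hp]
    simp

theorem zpowProd_apply_semiconj {X Y : Type*} {d : ℕ} {T : Fin d → Equiv.Perm X}
    {S : Fin d → Equiv.Perm Y} {π : X → Y} (hπ_factor : ∀ i x, π (T i x) = S i (π x))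
    (n : Fin d → ℤ) (x : X) : π (zpowProd T n x) = zpowProd S n (π x) :=
  prodMk_zpowProd_mem (H := semiconjPerms π) (fun i => hπ_factor i) n x

section Recurrence

variable {X : Type*} [MetricSpace X] [CompactSpace X] {d : ℕ} {T : Fin d → Equiv.Perm X}
  {R : Set (Fin d → ℤ)}

theorem isRecurrenceSet_of_forall_exists_dist_lt
    (hT_cont : ∀ i, Continuous (T i)) (hT_cont_symm : ∀ i, Continuous (T i).symm)
    (hT_comm : ∀ i j, Commute (T i) (T j)) (hmin : IsMinimalSystem T)
    (h : ∀ δ > 0, ∃ x, ∃ n ∈ R, dist (zpowProd T n x) x < δ) : IsRecurrenceSet T R := by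
  intro U hU hU_ne
  set O : Set (X × X) := ⋃ g, {q | zpowProd T g q.1 ∈ U ∧ zpowProd T g q.2 ∈ U}
  have hO_open : IsOpen O := isOpen_iUnion fun g =>
    have hg := continuous_zpowProd hT_cont hT_cont_symm g
    (hU.preimage (hg.comp continuous_fst)).inter (hU.preimage (hg.comp continuous_snd))
  have hdiag : Set.diagonal X ⊆ O := by
    rintro ⟨x, _⟩ (rfl : x = _)
    obtain ⟨_, ⟨g, rfl⟩, hgU⟩ := (hmin x).exists_mem_open hU hU_ne
    exact Set.mem_iUnion.2 ⟨g, hgU, hgU⟩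
  have hO_unif : O ∈ uniformity X := by
    rw [← nhdsSet_diagonal_eq_uniformity]
    exact hO_open.mem_nhdsSet.2 hdiag
  obtain ⟨δ, hδ, hδO⟩ := Metric.mem_uniformity_dist.1 hO_unif
  obtain ⟨x, n, hn, hx⟩ := h δ hδ
  obtain ⟨g, hgn, hg⟩ := Set.mem_iUnion.1 (hδO hx)
  refine ⟨n, hn, zpowProd T g x, hg, zpowProd T n (zpowProd T g x), ?_, ?_⟩
  · rw [← Equiv.Perm.mul_apply, (zpowProd_commute hT_comm n g).eq]
    exact hgn
  · rw [zpowProd_neg hT_comm]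
    simp

end Recurrence

section Proximal

variable {X Y : Type*} [MetricSpace X] [CompactSpace X] [TopologicalSpace Y] [T2Space Y] {d : ℕ}
  {T : Fin d → Equiv.Perm X} {S : Fin d → Equiv.Perm Y} {π : X → Y} {R : Set (Fin d → ℤ)}

theorem exists_dist_zpowProd_lt_of_proximal [Nonempty X]
    (hT_cont : ∀ i, Continuous (T i)) (hT_cont_symm : ∀ i, Continuous (T i).symm)
    (hT_comm : ∀ i j, Commute (T i) (T j)) (hS_comm : ∀ i j, Commute (S i) (S j))
    (hπ_cont : Continuous π) (hπ_surj : Function.Surjective π)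
    (hπ_factor : ∀ i x, π (T i x) = S i (π x))
    (hprox : ∀ x₁ x₂ : X, π x₁ = π x₂ → ∃ ns : ℕ → (Fin d → ℤ),
      Filter.Tendsto (fun k => dist (zpowProd T (ns k) x₁) (zpowProd T (ns k) x₂))
        Filter.atTop (nhds 0))
    (hR : IsRecurrenceSet S R) {δ : ℝ} (hδ : 0 < δ) :
    ∃ x, ∃ n ∈ R, dist (zpowProd T n x) x < δ := by
  obtain ⟨x₀⟩ := ‹Nonempty X›
  set P : Set (X × X) := ⋃ m, {q | dist (zpowProd T m q.1) (zpowProd T m q.2) < δ}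
  have hP_open : IsOpen P := isOpen_iUnion fun m =>
    have hm := continuous_zpowProd hT_cont hT_cont_symm m
    isOpen_lt ((hm.comp continuous_fst).dist (hm.comp continuous_snd)) continuous_const
  have hP_fiber : ∀ᶠ y in nhds (π x₀, π x₀), ∀ q ∈ Prod.map π π ⁻¹' {y}, q ∈ P := by
    refine (hπ_cont.prodMap hπ_cont).isClosedMap.eventually_nhds_fiber _ fun q hq => ?_
    obtain ⟨ns, hns⟩ := hprox q.1 q.2 (by simp_all [Prod.ext_iff])
    obtain ⟨k, hk⟩ := (hns.eventually (gt_mem_nhds hδ)).exists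
    exact hP_open.mem_nhds (Set.mem_iUnion.2 ⟨ns k, hk⟩)
  rw [nhds_prod_eq] at hP_fiber
  obtain ⟨t, ht, htP⟩ := Filter.mem_prod_self_iff.1 hP_fiber
  obtain ⟨V, hVt, hV, hx₀V⟩ := mem_nhds_iff.1 ht
  obtain ⟨n, hn, _, hyV, y', hy'V, rfl⟩ := hR V hV ⟨_, hx₀V⟩
  obtain ⟨x, hx⟩ := hπ_surj (zpowProd S (-n) y')
  have hTnx : π (zpowProd T n x) = y' := by
    rw [zpowProd_apply_semiconj hπ_factor, hx, zpowProd_neg hS_comm]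
    simp
  have hpair : (π x, π (zpowProd T n x)) ∈ t ×ˢ t := ⟨hVt (hx ▸ hyV), hVt (hTnx ▸ hy'V)⟩
  obtain ⟨m, hm⟩ := Set.mem_iUnion.1 <| htP hpair (x, zpowProd T n x) rfl
  refine ⟨zpowProd T m x, n, hn, ?_⟩
  rwa [dist_comm, ← Equiv.Perm.mul_apply, ← (zpowProd_commute hT_comm m n).eq]

end Proximal

theorem proximal_extension_lifts_recurrence_general
    (d : ℕ) (X Y : Type*) [MetricSpace X] [CompactSpace X] [MetricSpace Y]
    (T : Fin d → Equiv.Perm X) (S : Fin d → Equiv.Perm Y)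
    (hT_cont : ∀ i, Continuous (T i)) (hT_cont_symm : ∀ i, Continuous (T i).symm)
    (hT_comm : ∀ i j, Commute (T i) (T j))
    (hS_comm : ∀ i j, Commute (S i) (S j))
    (hminX : IsMinimalSystem T)
    (π : X → Y) (hπ_cont : Continuous π) (hπ_surj : Function.Surjective π)
    (hπ_factor : ∀ i x, π (T i x) = S i (π x))
    (hprox : ∀ x₁ x₂ : X, π x₁ = π x₂ → ∃ ns : ℕ → (Fin d → ℤ),
      Filter.Tendsto
        (fun k => dist (zpowProd T (ns k) x₁) (zpowProd T (ns k) x₂))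
        Filter.atTop (nhds 0))
    (R : Set (Fin d → ℤ)) (hR : IsRecurrenceSet S R) :
    IsRecurrenceSet T R := by
  intro U hU hU_ne
  have : Nonempty X := ⟨hU_ne.some⟩
  exact isRecurrenceSet_of_forall_exists_dist_lt hT_cont hT_cont_symm hT_comm hminX
    (fun _ hδ => exists_dist_zpowProd_lt_of_proximal hT_cont hT_cont_symm hT_comm hS_comm
      hπ_cont hπ_surj hπ_factor hprox hR hδ) U hU hU_ne

/-- Proximal extensions lift recurrence. -/
theorem proximal_extension_lifts_recurrence
    (d : ℕ) (X Y : Type*) [MetricSpace X] [CompactSpace X] [MetricSpace Y] [CompactSpace Y]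
    (T : Fin d → Equiv.Perm X) (S : Fin d → Equiv.Perm Y)
    (hT_cont : ∀ i, Continuous (T i)) (hT_cont_symm : ∀ i, Continuous (T i).symm)
    (hT_comm : ∀ i j, Commute (T i) (T j))
    (hS_cont : ∀ i, Continuous (S i)) (hS_cont_symm : ∀ i, Continuous (S i).symm)
    (hS_comm : ∀ i j, Commute (S i) (S j))
    (hminX : IsMinimalSystem T) (hminY : IsMinimalSystem S)
    (π : X → Y) (hπ_cont : Continuous π) (hπ_surj : Function.Surjective π)
    (hπ_factor : ∀ i x, π (T i x) = S i (π x))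
    (hprox : ∀ x₁ x₂ : X, π x₁ = π x₂ → ∃ ns : ℕ → (Fin d → ℤ),
      Filter.Tendsto
        (fun k => dist (zpowProd T (ns k) x₁) (zpowProd T (ns k) x₂))
        Filter.atTop (nhds 0))
    (R : Set (Fin d → ℤ)) (hR : IsRecurrenceSet S R) :
    IsRecurrenceSet T R :=
  proximal_extension_lifts_recurrence_general d X Y T S hT_cont hT_cont_symm hT_comm hS_comm hminX π
    hπ_cont hπ_surj hπ_factor hprox R hR
end
end

section
/- Let R ⊆ ℤ^d \ {0} be a set of ℤ^d-Bohr recurrence. Then there exist d' ≤ d, a permutation π of {1,…,d} (acting on ℤ^d by permuting coordinates), and an essential set of ℤ^{d'}-Bohr recurrence R' ⊆ ℤ^{d'} such that R' × {0}^{d−d'} ⊆ π(R). -/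
open scoped BigOperators

noncomputable section

/-- `R` is essential: every element has all coordinates nonzero. -/
def IsEssential {d : ℕ} (R : Set (Fin d → ℤ)) : Prop :=
  ∀ n ∈ R, ∀ i, n i ≠ 0

/-- The increasing enumeration of a finset of `Fin d`. -/
def embF {d : ℕ} (I : Finset (Fin d)) : Fin I.card → Fin d :=
  fun j => (I.orderIsoOfFin rfl j : Fin d)

lemma embF_mem {d : ℕ} (I : Finset (Fin d)) (j : Fin I.card) : embF I j ∈ I :=
  (I.orderIsoOfFin rfl j).2

lemma embF_injective {d : ℕ} (I : Finset (Fin d)) : Function.Injective (embF I) := by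
  intro a b hab
  have := (I.orderIsoOfFin rfl).injective (Subtype.ext hab)
  exact this

/-- Projection to the coordinates in `I`. -/
def projF {d : ℕ} (I : Finset (Fin d)) (n : Fin d → ℤ) : Fin I.card → ℤ :=
  fun j => n (embF I j)

/-- Elements of `R` supported exactly on `I`, projected to the coordinates of `I`. -/
def RI {d : ℕ} (R : Set (Fin d → ℤ)) (I : Finset (Fin d)) : Set (Fin I.card → ℤ) :=
  {m | ∃ n ∈ R, (∀ i : Fin d, n i ≠ 0 ↔ i ∈ I) ∧ projF I n = m}

lemma sum_ext {d : ℕ} (I : Finset (Fin d)) (β : Fin I.card → ℝ) (n : Fin d → ℤ) :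
    (∑ i : Fin d, (n i : ℝ) *
        (if h : i ∈ I then β ((I.orderIsoOfFin rfl).symm ⟨i, h⟩) else 0))
      = ∑ j : Fin I.card, ((projF I n j : ℤ) : ℝ) * β j := by
  classical
  rw [← Finset.sum_subset I.subset_univ (fun x _ hx => by simp [hx])]
  rw [← Finset.sum_attach I
    (fun i => (n i : ℝ) * (if h : i ∈ I then β ((I.orderIsoOfFin rfl).symm ⟨i, h⟩) else 0))]
  rw [← Finset.univ_eq_attach]
  rw [← Equiv.sum_comp (I.orderIsoOfFin rfl).toEquiv]
  apply Finset.sum_congr rfl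
  intro j _
  have hx : ((I.orderIsoOfFin rfl) j : Fin d) ∈ I := (I.orderIsoOfFin rfl j).2
  have h1 : (⟨((I.orderIsoOfFin rfl) j : Fin d), hx⟩ : {x // x ∈ I}) = (I.orderIsoOfFin rfl) j :=
    Subtype.ext rfl
  simp only [RelIso.coe_fn_toEquiv, dif_pos hx, h1, OrderIso.symm_apply_apply]
  rfl

lemma exists_good {d : ℕ} (R : Set (Fin d → ℤ)) (hR : IsBohrRecurrence d R) :
    ∃ I : Finset (Fin d), IsBohrRecurrence I.card (RI R I) := by
  classical
  by_contra hcon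
  push_neg at hcon
  have H : ∀ I : Finset (Fin d), ∃ k, 1 ≤ k ∧ ∃ α : Fin k → Fin I.card → ℝ, ∃ ε, 0 < ε ∧
      ∀ m : Fin I.card → ℤ,
        (∀ j, torusNorm (∑ i, (m i : ℝ) * α j i) < ε) → m ∉ RI R I := by
    intro I
    have h := hcon I
    rw [IsBohrRecurrence] at h
    push_neg at h
    obtain ⟨V, hV, hdisj⟩ := h
    obtain ⟨k, hk, α, ε, hε, himp⟩ := hV
    rw [Set.eq_empty_iff_forall_notMem] at hdisj
    exact ⟨k, hk, α, ε, hε, fun m hm hmR => hdisj m ⟨hmR, himp m hm⟩⟩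
  choose k hk α ε hε himp using H
  -- combine all conditions into a single Bohr₀ set in ℤ^d
  haveI : Nonempty ((I : Finset (Fin d)) × Fin (k I)) := ⟨⟨∅, ⟨0, hk ∅⟩⟩⟩
  set J := (I : Finset (Fin d)) × Fin (k I)
  set k' : ℕ := Fintype.card J with hk'def
  have hk' : 1 ≤ k' := Fintype.card_pos
  set e : Fin k' ≃ J := (Fintype.equivFin J).symm with he
  set β : J → Fin d → ℝ := fun p i =>
    if h : i ∈ p.1 then α p.1 p.2 ((p.1.orderIsoOfFin rfl).symm ⟨i, h⟩) else 0 with hβ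
  set α' : Fin k' → Fin d → ℝ := fun i' => β (e i') with hα'
  set ε' : ℝ := Finset.univ.inf' Finset.univ_nonempty (fun I : Finset (Fin d) => ε I) with hε'def
  have hε' : 0 < ε' := by
    rw [hε'def, Finset.lt_inf'_iff]
    exact fun I _ => hε I
  set V : Set (Fin d → ℤ) :=
    {n | ∀ i' : Fin k', torusNorm (∑ i, (n i : ℝ) * α' i' i) < ε'} with hVdef
  have hV : IsBohr0 d V := ⟨k', hk', α', ε', hε', fun n h => h⟩
  obtain ⟨n, hnR, hnV⟩ := hR V hV
  set I : Finset (Fin d) := Finset.univ.filter (fun i => n i ≠ 0) with hIdef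
  have hsupp : ∀ i : Fin d, n i ≠ 0 ↔ i ∈ I := by
    intro i; simp [hIdef]
  have hmem : projF I n ∈ RI R I := ⟨n, hnR, hsupp, rfl⟩
  refine himp I (projF I n) ?_ hmem
  intro j
  have h1 := hnV (e.symm ⟨I, j⟩)
  have h2 : α' (e.symm ⟨I, j⟩) = β ⟨I, j⟩ := congrArg β (e.apply_symm_apply ⟨I, j⟩)
  have h3 : (∑ i, (n i : ℝ) * α' (e.symm ⟨I, j⟩) i)
      = ∑ i, ((projF I n i : ℤ) : ℝ) * α I j i := by
    rw [h2]
    exact sum_ext I (α I j) n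
  have h4 : ε' ≤ ε I := Finset.inf'_le _ (Finset.mem_univ I)
  calc torusNorm (∑ i, ((projF I n i : ℤ) : ℝ) * α I j i)
      = torusNorm (∑ i, (n i : ℝ) * α' (e.symm ⟨I, j⟩) i) := by rw [h3]
    _ < ε' := h1
    _ ≤ ε I := h4

/-- Every set of `ℤ^d`-Bohr recurrence avoiding `0` contains, after a permutation of
coordinates, an essential set of `ℤ^{d'}`-Bohr recurrence extended by zeros. -/
theorem reduction_to_essential_bohr_recurrence
    (d : ℕ) (R : Set (Fin d → ℤ))
    (hR : IsBohrRecurrence d R) (h0 : (0 : Fin d → ℤ) ∉ R) :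
    ∃ d' : ℕ, d' ≤ d ∧ ∃ σ : Equiv.Perm (Fin d), ∃ R' : Set (Fin d' → ℤ),
      IsBohrRecurrence d' R' ∧ IsEssential R' ∧
      ∀ m ∈ R', (fun i : Fin d => if h : (i : ℕ) < d' then m ⟨(i : ℕ), h⟩ else 0)
        ∈ (fun n : Fin d → ℤ => n ∘ ⇑σ) '' R := by
  classical
  obtain ⟨I, hI⟩ := exists_good R hR
  have hcard : I.card ≤ d := by
    have := Finset.card_le_univ I
    simpa using this
  have hcc : Iᶜ.card = d - I.card := by
    simp [Finset.card_compl]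
  -- the permutation sending the first `I.card` coordinates to `I` in increasing order
  have hsub : ∀ i : Fin d, ¬ ((i : ℕ) < I.card) → (i : ℕ) - I.card < Iᶜ.card := by
    intro i h
    have := i.isLt
    omega
  set f : Fin d → Fin d := fun i =>
    if h : (i : ℕ) < I.card then embF I ⟨(i : ℕ), h⟩
    else (Iᶜ.orderIsoOfFin rfl ⟨(i : ℕ) - I.card, hsub i h⟩ : Fin d) with hf
  have hfI : ∀ (i : Fin d) (h : (i : ℕ) < I.card), f i = embF I ⟨(i : ℕ), h⟩ := by
    intro i h; simp [hf, h]
  have hfIc : ∀ (i : Fin d), ¬ ((i : ℕ) < I.card) → f i ∉ I := by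
    intro i h
    have : f i ∈ Iᶜ := by
      rw [hf]; simp only [dif_neg h]
      exact (Iᶜ.orderIsoOfFin rfl ⟨(i : ℕ) - I.card, hsub i h⟩).2
    exact Finset.mem_compl.mp this
  have hfinj : Function.Injective f := by
    intro a b hab
    by_cases ha : (a : ℕ) < I.card <;> by_cases hb : (b : ℕ) < I.card
    · rw [hfI a ha, hfI b hb] at hab
      have hab2 := embF_injective I hab
      have h3 : (a : ℕ) = (b : ℕ) := by simpa using hab2
      exact Fin.ext h3
    · exact absurd (hab ▸ (hfI a ha ▸ embF_mem I ⟨(a : ℕ), ha⟩ :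
        f a ∈ I)) (hfIc b hb)
    · exact absurd ((hab.symm) ▸ (hfI b hb ▸ embF_mem I ⟨(b : ℕ), hb⟩ :
        f b ∈ I)) (hfIc a ha)
    · rw [hf] at hab
      simp only [dif_neg ha, dif_neg hb] at hab
      have := (Iᶜ.orderIsoOfFin rfl).injective (Subtype.ext hab)
      have h2 : (a : ℕ) - I.card = (b : ℕ) - I.card := congrArg Fin.val this
      have := a.isLt; have := b.isLt
      exact Fin.ext (by omega)
  have hfbij : Function.Bijective f := Finite.injective_iff_bijective.mp hfinj
  refine ⟨I.card, hcard, Equiv.ofBijective f hfbij, RI R I, hI, ?_, ?_⟩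
  · -- essential
    rintro m ⟨n, _, hsupp, hproj⟩ i
    rw [← hproj]
    exact (hsupp (embF I i)).mpr (embF_mem I i)
  · rintro m ⟨n, hnR, hsupp, hproj⟩
    refine ⟨n, hnR, ?_⟩
    funext i
    show n (f i) = _
    by_cases h : (i : ℕ) < I.card
    · rw [dif_pos h, hfI i h, ← hproj]
      rfl
    · rw [dif_neg h]
      by_contra hne
      exact (hfIc i h) ((hsupp (f i)).mp hne)
end
end

section
/- Let R ⊆ ℤ^d be a set of ℤ^d-Bohr recurrence, let k ∈ ℤ \ {0} and i ∈ {1,…,d}, and set B_k^i = {n ∈ ℤ^d : n_i = k}. Then R₀ = R \ B_k^i is a set of ℤ^d-Bohr recurrence. -/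
open scoped BigOperators

noncomputable section

/-- Bands property: removing from a set of `ℤ^d`-Bohr recurrence the band where the
`i`-th coordinate equals a fixed nonzero integer `k` preserves Bohr recurrence. -/
theorem bands_property
    (d : ℕ) (R : Set (Fin d → ℤ)) (hR : IsBohrRecurrence d R)
    (k : ℤ) (hk : k ≠ 0) (i : Fin d) :
    IsBohrRecurrence d (R \ {n : Fin d → ℤ | n i = k}) := by
  rintro V ⟨m, hm, α, ε, hε, hV⟩
  set β : Fin d → ℝ := fun j => if j = i then 1 / (2 * (k : ℝ)) else 0 with hβ
  set α' : Fin (m + 1) → Fin d → ℝ := Fin.cons β α with hα'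
  set ε' : ℝ := min ε (1 / 2) with hε'def
  have hε' : 0 < ε' := lt_min hε (by norm_num)
  set V' : Set (Fin d → ℤ) :=
    {n | ∀ j : Fin (m + 1), torusNorm (∑ l, (n l : ℝ) * α' j l) < ε'} with hV'
  have hB : IsBohr0 d V' := ⟨m + 1, by omega, α', ε', hε', fun n h => h⟩
  obtain ⟨n, hnR, hnV'⟩ := hR V' hB
  have hsum : ∑ l, (n l : ℝ) * α' 0 l = (n i : ℝ) * (1 / (2 * (k : ℝ))) := by
    simp [hα', hβ, mul_ite, Finset.sum_ite_eq']
  refine ⟨n, ⟨hnR, ?_⟩, ?_⟩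
  · intro hni
    have h0 := hnV' 0
    rw [hsum] at h0
    have hni' : n i = k := hni
    rw [hni'] at h0
    have hk' : (k : ℝ) ≠ 0 := Int.cast_ne_zero.mpr hk
    have : (k : ℝ) * (1 / (2 * (k : ℝ))) = 1 / 2 := by field_simp
    rw [this] at h0
    have : torusNorm (1 / 2) = 1 / 2 := by
      have : round ((1 : ℝ) / 2) = 1 := by norm_num [round_eq]
      simp [torusNorm, this]
      norm_num
    rw [this] at h0
    have := lt_of_lt_of_le h0 (min_le_right _ _)
    exact lt_irrefl _ this
  · apply hV
    intro j
    have := hnV' j.succ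
    have h2 : α' j.succ = α j := by simp [hα']
    rw [h2] at this
    exact lt_of_lt_of_le this (min_le_left _ _)
end
end

section
/- Let R ⊆ ℤ^d be a set of ℤ^d-Bohr recurrence and let M be an invertible d×d matrix with rational coefficients. Then the set M^{-1}R ∩ ℤ^d = {n ∈ ℤ^d : Mn ∈ R} is a set of ℤ^d-Bohr recurrence. -/
open scoped BigOperators

noncomputable section

lemma torusNorm_int_div_dvd {b : ℤ} {q : ℕ} (hq : 0 < q)
    (h : torusNorm ((b : ℝ) / (q : ℝ)) < 1 / (q : ℝ)) : (q : ℤ) ∣ b := by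
  have hq' : (0 : ℝ) < q := by exact_mod_cast hq
  set r := round ((b : ℝ) / (q : ℝ)) with hr
  have h1 : |(b : ℝ) - q * r| < 1 := by
    have h2 : |((b : ℝ) / q - r) * q| < (1 / q) * q := by
      rw [abs_mul, abs_of_pos hq']
      exact mul_lt_mul_of_pos_right h hq'
    have h3 : ((b : ℝ) / q - r) * q = (b : ℝ) - q * r := by
      field_simp
    rw [h3] at h2
    rw [one_div, inv_mul_cancel₀ (ne_of_gt hq')] at h2
    exact h2
  have h4 : |b - (q : ℤ) * r| < 1 := by exact_mod_cast h1
  have h5 := abs_lt.mp h4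
  exact ⟨r, by omega⟩

lemma den_dvd_int_mul {r : ℚ} {q : ℕ} (hdvd : r.den ∣ q) :
    ∃ a : ℤ, (a : ℚ) = (q : ℚ) * r := by
  obtain ⟨c, rfl⟩ := hdvd
  refine ⟨r.num * c, ?_⟩
  have hden : ((r.den : ℚ)) * r = (r.num : ℚ) := by
    rw [mul_comm]
    exact_mod_cast Rat.mul_den_eq_num r
  push_cast
  rw [mul_comm (r.den : ℚ) (c : ℚ), mul_assoc, hden]
  ring

/-- Preimage of a set of `ℤ^d`-Bohr recurrence under an invertible rational matrix:
`M⁻¹R ∩ ℤ^d = {n ∈ ℤ^d : Mn ∈ R}` is a set of `ℤ^d`-Bohr recurrence. -/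
theorem rational_matrix_preimage_bohr_recurrence
    (d : ℕ) (R : Set (Fin d → ℤ)) (hR : IsBohrRecurrence d R)
    (M : Matrix (Fin d) (Fin d) ℚ) (hM : IsUnit M.det) :
    IsBohrRecurrence d
      {n : Fin d → ℤ | ∃ m ∈ R,
        M.mulVec (fun i => (n i : ℚ)) = fun i => (m i : ℚ)} := by
  intro V hV
  obtain ⟨k, hk, α, ε, hε, hVmem⟩ := hV
  set N := M⁻¹ with hN
  -- common denominator of all entries of N
  set q : ℕ := ∏ i : Fin d, ∏ l : Fin d, (N i l).den with hqdef
  have hq : 0 < q := Finset.prod_pos fun i _ => Finset.prod_pos fun l _ => (N i l).pos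
  have hq' : (0 : ℝ) < q := by exact_mod_cast hq
  have hqQ : (0 : ℚ) < q := by exact_mod_cast hq
  have hAex : ∀ i l : Fin d, ∃ a : ℤ, (a : ℚ) = (q : ℚ) * N i l := by
    intro i l
    apply den_dvd_int_mul
    exact dvd_trans (Finset.dvd_prod_of_mem (fun l' => (N i l').den) (Finset.mem_univ l))
      (Finset.dvd_prod_of_mem (fun i' => ∏ l' : Fin d, (N i' l').den) (Finset.mem_univ i))
  choose A hA using hAex
  -- the auxiliary Bohr set W
  set W : Set (Fin d → ℤ) :=
    {m | ∃ n ∈ V, M.mulVec (fun i => (n i : ℚ)) = fun i => (m i : ℚ)} with hW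
  have hWBohr : IsBohr0 d W := by
    refine ⟨k + d, le_trans hk (Nat.le_add_right k d),
      Fin.append (fun j l => ∑ i, ((N i l : ℚ) : ℝ) * α j i)
        (fun i l => (A i l : ℝ) / q), min ε (1 / q), lt_min hε (by positivity), ?_⟩
    intro m hm
    -- integrality conditions
    have hint : ∀ i : Fin d, (q : ℤ) ∣ ∑ l, m l * A i l := by
      intro i
      have h1 := hm (Fin.natAdd k i)
      rw [Fin.append_right] at h1
      have h2 : ∑ l, (m l : ℝ) * ((A i l : ℝ) / q) = ((∑ l, m l * A i l : ℤ) : ℝ) / q := by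
        push_cast
        rw [Finset.sum_div]
        exact Finset.sum_congr rfl fun l _ => (mul_div_assoc _ _ _).symm
      rw [h2] at h1
      exact torusNorm_int_div_dvd hq (lt_of_lt_of_le h1 (min_le_right _ _))
    choose n hn using hint
    -- n is the integer vector with M n = m
    have hnQ : ∀ i, (n i : ℚ) = ∑ l, N i l * (m l : ℚ) := by
      intro i
      have h1 : (q : ℚ) * (n i : ℚ) = (q : ℚ) * ∑ l, N i l * (m l : ℚ) := by
        have h2 : ((∑ l, m l * A i l : ℤ) : ℚ) = (q : ℚ) * ∑ l, N i l * (m l : ℚ) := by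
          push_cast
          rw [Finset.mul_sum]
          refine Finset.sum_congr rfl fun l _ => ?_
          rw [hA i l]; ring
        rw [← h2, hn i]
        push_cast
        ring
      exact mul_left_cancel₀ (ne_of_gt hqQ) h1
    have hMn : M.mulVec (fun i => (n i : ℚ)) = fun i => (m i : ℚ) := by
      have h1 : (fun i => (n i : ℚ)) = N.mulVec (fun l => (m l : ℚ)) := by
        funext i
        rw [hnQ i]
        rfl
      rw [h1, Matrix.mulVec_mulVec, hN, Matrix.mul_nonsing_inv M hM, Matrix.one_mulVec]
    have hnV : n ∈ V := by
      apply hVmem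
      intro j
      have h1 := hm (Fin.castAdd d j)
      rw [Fin.append_left] at h1
      have hcast : ∀ i, (n i : ℝ) = ∑ l, ((N i l : ℚ) : ℝ) * (m l : ℝ) := by
        intro i
        exact_mod_cast hnQ i
      have h2 : ∑ l, (m l : ℝ) * ∑ i, ((N i l : ℚ) : ℝ) * α j i
          = ∑ i, (n i : ℝ) * α j i := by
        calc ∑ l, (m l : ℝ) * ∑ i, ((N i l : ℚ) : ℝ) * α j i
            = ∑ l, ∑ i, ((N i l : ℚ) : ℝ) * (m l : ℝ) * α j i := by
              refine Finset.sum_congr rfl fun l _ => ?_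
              rw [Finset.mul_sum]
              exact Finset.sum_congr rfl fun i _ => by ring
          _ = ∑ i, ∑ l, ((N i l : ℚ) : ℝ) * (m l : ℝ) * α j i := Finset.sum_comm
          _ = ∑ i, (n i : ℝ) * α j i := by
              refine Finset.sum_congr rfl fun i _ => ?_
              rw [← Finset.sum_mul, ← hcast i]
      rw [h2] at h1
      exact lt_of_lt_of_le h1 (min_le_left _ _)
    exact ⟨n, hnV, hMn⟩
  obtain ⟨m, hmR, n, hnV, heq⟩ := hR W hWBohr
  exact ⟨n, ⟨m, hmR, heq⟩, hnV⟩

end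
end

section
/- Let R ⊆ ℤ^d be a non-redundant set of ℤ^d-Bohr recurrence and let M be an invertible d×d matrix with rational coefficients. Then M^{-1}R ∩ ℤ^d = {n ∈ ℤ^d : Mn ∈ R} is a non-redundant set of ℤ^d-Bohr recurrence. -/
open scoped BigOperators

noncomputable section

/-- A set `R` of `ℤ^d`-Bohr recurrence is redundant if there is a nonzero `v ∈ ℤ^d`
such that `{n ∈ R : v·n = 0}` is still a set of `ℤ^d`-Bohr recurrence. -/
def IsRedundant {d : ℕ} (R : Set (Fin d → ℤ)) : Prop :=
  ∃ v : Fin d → ℤ, v ≠ 0 ∧ IsBohrRecurrence d {n ∈ R | ∑ i, v i * n i = 0}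

open Matrix in
lemma exists_int_of_den_dvd (q : ℚ) (D : ℕ) (h : q.den ∣ D) : ∃ z : ℤ, (D : ℚ) * q = z := by
  obtain ⟨c, hc⟩ := h
  refine ⟨q.num * c, ?_⟩
  subst hc
  push_cast
  rw [mul_comm (q.den : ℚ), mul_assoc, Rat.den_mul_eq_num, mul_comm]

lemma eq_round_of_torusNorm_lt (x : ℝ) (D : ℕ) (hD : 0 < D) (z : ℤ)
    (hz : (D : ℝ) * x = z) (h : torusNorm x < 1 / D) : x = round x := by
  have hD' : (0:ℝ) < D := by exact_mod_cast hD
  have h1 : |(z : ℝ) - D * round x| < 1 := by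
    rw [← hz, ← mul_sub, abs_mul, abs_of_pos hD']
    calc (D:ℝ) * |x - round x| < D * (1/D) := mul_lt_mul_of_pos_left h hD'
      _ = 1 := by field_simp
  have h2 : (z : ℝ) = D * round x := by
    have habs : |((z - D * round x : ℤ) : ℝ)| < 1 := by push_cast; exact h1
    have h3 : |(z - D * round x : ℤ)| < 1 := by exact_mod_cast habs
    have h4 := Int.abs_lt_one_iff.mp h3
    have : ((z - D * round x : ℤ) : ℝ) = 0 := by exact_mod_cast h4
    push_cast at this
    linarith
  have : (D:ℝ) * x = D * round x := by rw [hz, h2]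
  exact mul_left_cancel₀ (ne_of_gt hD') this

lemma isBohr0_preimage (d : ℕ) (A : Matrix (Fin d) (Fin d) ℚ) (V : Set (Fin d → ℤ))
    (hV : IsBohr0 d V) :
    IsBohr0 d {m : Fin d → ℤ |
      ∃ n ∈ V, A.mulVec (fun l => (m l : ℚ)) = fun i => (n i : ℚ)} := by
  obtain ⟨k, hk, α, ε, hε, hα⟩ := hV
  set D : ℕ := ∏ p : Fin d × Fin d, (A p.1 p.2).den with hD
  have hDpos : 0 < D := Finset.prod_pos (fun p _ => (A p.1 p.2).pos)
  choose B hB using fun i l => exists_int_of_den_dvd (A i l) D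
    (Finset.dvd_prod_of_mem (fun p : Fin d × Fin d => (A p.1 p.2).den) (Finset.mem_univ (i, l)))
  refine ⟨d + k, by omega,
    Fin.addCases (fun i l => ((A i l : ℚ) : ℝ)) (fun j l => ∑ i, α j i * ((A i l : ℚ) : ℝ)),
    min ε (1 / D), by positivity, ?_⟩
  intro m hm
  set mQ : Fin d → ℚ := fun l => (m l : ℚ) with hmQ
  have key : ∀ i : Fin d, ∃ z : ℤ, A.mulVec mQ i = z := by
    intro i
    have h1 := hm (Fin.castAdd k i)
    simp only [Fin.addCases_left] at h1
    have hx : ∑ l, (m l : ℝ) * ((A i l : ℚ) : ℝ) = ((A.mulVec mQ i : ℚ) : ℝ) := by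
      simp only [Matrix.mulVec, dotProduct, hmQ]
      push_cast
      exact Finset.sum_congr rfl fun l _ => mul_comm _ _
    rw [hx] at h1
    have h1' : torusNorm ((A.mulVec mQ i : ℚ) : ℝ) < 1 / D :=
      lt_of_lt_of_le h1 (min_le_right _ _)
    have hz : ∃ z : ℤ, (D : ℚ) * A.mulVec mQ i = z := by
      refine ⟨∑ l, B i l * m l, ?_⟩
      simp only [Matrix.mulVec, dotProduct, hmQ, Finset.mul_sum]
      push_cast
      refine Finset.sum_congr rfl fun l _ => ?_
      rw [← mul_assoc, hB i l]
    obtain ⟨z, hz⟩ := hz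
    have hzR : (D : ℝ) * ((A.mulVec mQ i : ℚ) : ℝ) = (z : ℝ) := by exact_mod_cast hz
    have := eq_round_of_torusNorm_lt _ D hDpos z hzR h1'
    refine ⟨round ((A.mulVec mQ i : ℚ) : ℝ), ?_⟩
    exact_mod_cast this
  choose n hn using key
  refine ⟨n, ?_, funext hn⟩
  apply hα
  intro j
  have h2 := hm (Fin.natAdd d j)
  simp only [Fin.addCases_right] at h2
  have heq : ∑ i, (n i : ℝ) * α j i = ∑ l, (m l : ℝ) * ∑ i, α j i * ((A i l : ℚ) : ℝ) := by
    have hni : ∀ i, ((n i : ℚ) : ℝ) = ((A.mulVec mQ i : ℚ) : ℝ) := fun i => by rw [hn i]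
    calc ∑ i, (n i : ℝ) * α j i = ∑ i, ((A.mulVec mQ i : ℚ) : ℝ) * α j i := by
          refine Finset.sum_congr rfl fun i _ => ?_
          rw [show ((n i : ℝ)) = ((n i : ℚ) : ℝ) by push_cast; ring, hni i]
      _ = ∑ i, (∑ l, ((A i l : ℚ) : ℝ) * (m l : ℝ)) * α j i := by
          refine Finset.sum_congr rfl fun i _ => ?_
          congr 1
          simp only [Matrix.mulVec, dotProduct, hmQ]
          push_cast
          rfl
      _ = ∑ l, (m l : ℝ) * ∑ i, α j i * ((A i l : ℚ) : ℝ) := by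
          simp only [Finset.sum_mul, Finset.mul_sum]
          rw [Finset.sum_comm]
          exact Finset.sum_congr rfl fun l _ => Finset.sum_congr rfl fun i _ => by ring
  rw [heq]
  exact lt_of_lt_of_le h2 (min_le_left _ _)

open Matrix in
/-- Non-redundancy is preserved under preimages by invertible rational matrices. -/
theorem rational_matrix_preimage_nonredundant
    (d : ℕ) (R : Set (Fin d → ℤ))
    (hR : IsBohrRecurrence d R) (hRnr : ¬ IsRedundant R)
    (M : Matrix (Fin d) (Fin d) ℚ) (hM : IsUnit M.det) :
    IsBohrRecurrence d
      {n : Fin d → ℤ | ∃ m ∈ R, M.mulVec (fun i => (n i : ℚ)) = fun i => (m i : ℚ)} ∧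
    ¬ IsRedundant
      {n : Fin d → ℤ | ∃ m ∈ R, M.mulVec (fun i => (n i : ℚ)) = fun i => (m i : ℚ)} := by
  constructor
  · intro V hV
    obtain ⟨m, hmR, hmW⟩ := hR _ (isBohr0_preimage d M⁻¹ V hV)
    obtain ⟨n, hnV, hmn⟩ := hmW
    refine ⟨n, ⟨m, hmR, ?_⟩, hnV⟩
    rw [← hmn, Matrix.mulVec_mulVec, Matrix.mul_nonsing_inv M hM, Matrix.one_mulVec]
  · intro hSred
    apply hRnr
    obtain ⟨v, hv, hrec⟩ := hSred
    set vQ : Fin d → ℚ := fun i => (v i : ℚ) with hvQ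
    set wQ : Fin d → ℚ := Mᵀ⁻¹.mulVec vQ with hwQdef
    have hMT : IsUnit Mᵀ.det := by rwa [Matrix.det_transpose]
    have hMw : Mᵀ.mulVec wQ = vQ := by
      rw [hwQdef, Matrix.mulVec_mulVec, Matrix.mul_nonsing_inv _ hMT, Matrix.one_mulVec]
    set Dw : ℕ := ∏ i, (wQ i).den with hDw
    have hDwpos : 0 < Dw := Finset.prod_pos fun i _ => (wQ i).pos
    choose w hw using fun i => exists_int_of_den_dvd (wQ i) Dw
      (Finset.dvd_prod_of_mem (fun i => (wQ i).den) (Finset.mem_univ i))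
    refine ⟨w, ?_, ?_⟩
    · intro hw0
      apply hv
      have hwQ0 : wQ = 0 := by
        funext i
        have h0 : (Dw : ℚ) * wQ i = 0 := by
          rw [hw i]
          simp [congrFun hw0 i]
        have hDw0 : (Dw : ℚ) ≠ 0 := by positivity
        simpa [hDw0] using (mul_eq_zero.mp h0).resolve_left hDw0
      have hvQ0 : vQ = 0 := by rw [← hMw, hwQ0, Matrix.mulVec_zero]
      funext i
      have := congrFun hvQ0 i
      simpa [hvQ] using this
    · intro V hV
      obtain ⟨n, ⟨hnS, hnv⟩, hnU⟩ := hrec _ (isBohr0_preimage d M V hV)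
      obtain ⟨m, hmR, hMn⟩ := hnS
      obtain ⟨m', hm'V, hMn'⟩ := hnU
      have hmm : m = m' := by
        funext i
        have : ((m i : ℚ)) = ((m' i : ℚ)) := by
          rw [← congrFun hMn i, ← congrFun hMn' i]
        exact_mod_cast this
      refine ⟨m, ⟨hmR, ?_⟩, hmm ▸ hm'V⟩
      have hQ : (((∑ i, w i * m i : ℤ)) : ℚ) = 0 := by
        push_cast
        calc ∑ i, (w i : ℚ) * (m i : ℚ)
            = ∑ i, ((Dw : ℚ) * wQ i) * (m i : ℚ) := by
              exact Finset.sum_congr rfl fun i _ => by rw [hw i]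
          _ = (Dw : ℚ) * (wQ ⬝ᵥ fun i => (m i : ℚ)) := by
              simp only [dotProduct, Finset.mul_sum, mul_assoc]
          _ = (Dw : ℚ) * (wQ ⬝ᵥ M.mulVec fun i => (n i : ℚ)) := by rw [hMn]
          _ = (Dw : ℚ) * ((Mᵀ.mulVec wQ) ⬝ᵥ fun i => (n i : ℚ)) := by
              rw [Matrix.dotProduct_mulVec, Matrix.mulVec_transpose]
          _ = (Dw : ℚ) * (vQ ⬝ᵥ fun i => (n i : ℚ)) := by rw [hMw]
          _ = 0 := by
              have hd : vQ ⬝ᵥ (fun i => (n i : ℚ)) = ((∑ i, v i * n i : ℤ) : ℚ) := by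
                simp only [dotProduct, hvQ]
                push_cast
                rfl
              rw [hd, hnv]
              simp
      exact_mod_cast hQ
end
end

section
/- Let R ⊆ ℤ be a set of ℤ-Bohr recurrence and let α = (α₁,…,α_d) ∈ ℝ^d. Then the set R̃ = {(⌊nα₁ + 1/2⌋, …, ⌊nα_d + 1/2⌋) ∈ ℤ^d : n ∈ R} is a set of ℤ^d-Bohr recurrence, where ⌊x⌋ denotes the greatest integer ≤ x. -/
open scoped BigOperators

noncomputable section

/-- Bohr₀ sets in `ℤ`. -/
def IsBohr0Z (V : Set ℤ) : Prop :=
  ∃ k : ℕ, 1 ≤ k ∧ ∃ α : Fin k → ℝ, ∃ ε : ℝ, 0 < ε ∧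
    ∀ n : ℤ, (∀ j : Fin k, torusNorm ((n : ℝ) * α j) < ε) → n ∈ V

/-- `R ⊆ ℤ` is a set of `ℤ`-Bohr recurrence if it meets every Bohr₀ set of `ℤ`. -/
def IsBohrRecurrenceZ (R : Set ℤ) : Prop :=
  ∀ V : Set ℤ, IsBohr0Z V → (R ∩ V).Nonempty

/-!
Since `⌊x + 1/2⌋ = round x`, it suffices to show that the pull-back of a Bohr₀ set
`V ⊆ ℤ^d` (with frequencies `β₁, …, β_k` and radius `ε`) under `n ↦ round (n α)` is a
Bohr₀ set of `ℤ`. Writing `round (n αᵢ) = n αᵢ - eᵢ` with `|eᵢ| = ‖n αᵢ‖_𝕋`, we get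
`‖round (n α) · βⱼ‖_𝕋 ≤ ‖n (α · βⱼ)‖_𝕋 + Σᵢ ‖n αᵢ‖_𝕋 |βⱼᵢ|`, so the frequencies
`α · β₁, …, α · β_k, α₁, …, α_d` with a small enough radius do the job.
-/

open Finset

lemma torusNorm_add_le_add_abs (x y : ℝ) : torusNorm (x + y) ≤ torusNorm x + |y| :=
  calc |x + y - round (x + y)| ≤ |x + y - round x| := round_le _ _
    _ = |(x - round x) + y| := by ring_nf
    _ ≤ |x - round x| + |y| := abs_add_le _ _

lemma torusNorm_sum_round_mul_le {ι : Type*} (s : Finset ι) (x β : ι → ℝ) :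
    torusNorm (∑ i ∈ s, (round (x i) : ℝ) * β i) ≤
      torusNorm (∑ i ∈ s, x i * β i) + ∑ i ∈ s, torusNorm (x i) * |β i| := by
  have hsplit : ∑ i ∈ s, (round (x i) : ℝ) * β i =
      ∑ i ∈ s, x i * β i + -∑ i ∈ s, (x i - round (x i)) * β i := by
    rw [← sub_eq_add_neg, ← sum_sub_distrib]
    exact sum_congr rfl fun i _ => by ring
  have herror : |∑ i ∈ s, (x i - round (x i)) * β i| ≤ ∑ i ∈ s, torusNorm (x i) * |β i| :=
    (abs_sum_le_sum_abs _ _).trans_eq (sum_congr rfl fun i _ => abs_mul _ _)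
  calc _ ≤ torusNorm (∑ i ∈ s, x i * β i) + |∑ i ∈ s, (x i - round (x i)) * β i| := by
        rw [hsplit, ← abs_neg (∑ i ∈ s, _)]
        exact torusNorm_add_le_add_abs _ _
    _ ≤ _ := by gcongr

theorem IsBohr0.isBohr0Z_preimage_round_mul {d : ℕ} {V : Set (Fin d → ℤ)} (hV : IsBohr0 d V)
    (α : Fin d → ℝ) : IsBohr0Z {n : ℤ | (fun i => round ((n : ℝ) * α i)) ∈ V} := by
  obtain ⟨k, hk, β, ε, hε, hV⟩ := hV
  set B := ∑ j, ∑ i, |β j i|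
  have hB : 0 ≤ B := by positivity
  have hBj : ∀ j, ∑ i, |β j i| ≤ B := fun j =>
    single_le_sum (f := fun j => ∑ i, |β j i|) (fun _ _ => by positivity) (mem_univ j)
  set δ := ε / (1 + B)
  refine ⟨k + d, by omega, Fin.append (fun j => ∑ i, α i * β j i) α, δ, by positivity,
    fun n hn => hV _ fun j => ?_⟩
  have hfreq : torusNorm (n * ∑ i, α i * β j i) < δ := by simpa using hn (Fin.castAdd d j)
  have hcoord : ∀ i, torusNorm (n * α i) < δ := fun i => by simpa using hn (Fin.natAdd k i)
  have herror : ∑ i, torusNorm (n * α i) * |β j i| ≤ δ * B :=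
    calc ∑ i, torusNorm (n * α i) * |β j i| ≤ ∑ i, δ * |β j i| :=
          sum_le_sum fun i _ => mul_le_mul_of_nonneg_right (hcoord i).le (abs_nonneg _)
      _ ≤ δ * B := by rw [← mul_sum]; exact mul_le_mul_of_nonneg_left (hBj j) (by positivity)
  calc torusNorm (∑ i, (round ((n : ℝ) * α i) : ℝ) * β j i)
      ≤ torusNorm (∑ i, n * α i * β j i) + ∑ i, torusNorm (n * α i) * |β j i| :=
        torusNorm_sum_round_mul_le _ _ _
    _ < δ + δ * B := by
        simp only [mul_assoc, ← mul_sum]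
        linarith
    _ = ε := by unfold δ; field_simp

/-- If `R ⊆ ℤ` is a set of `ℤ`-Bohr recurrence and `α ∈ ℝ^d`, then
`{(⌊nα₁ + 1/2⌋, …, ⌊nα_d + 1/2⌋) : n ∈ R}` is a set of `ℤ^d`-Bohr recurrence. -/
theorem rounded_multiples_bohr_recurrence
    (d : ℕ) (R : Set ℤ) (hR : IsBohrRecurrenceZ R) (α : Fin d → ℝ) :
    IsBohrRecurrence d
      ((fun n : ℤ => fun i : Fin d => ⌊(n : ℝ) * α i + 1 / 2⌋) '' R) := by
  intro V hV
  obtain ⟨n, hnR, hnV⟩ := hR _ (hV.isBohr0Z_preimage_round_mul α)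
  refine ⟨_, ⟨n, hnR, rfl⟩, ?_⟩
  simpa only [Set.mem_ofPred_eq, round_eq] using hnV
end
end

section
/- Let R ⊆ ℤ², let R₁ = {n ∈ ℤ : ∃ m ∈ ℤ, (n,m) ∈ R}, and for n ∈ R₁ let R(n,•) = {m ∈ ℤ : (n,m) ∈ R} and let L_n denote the length of the largest interval of consecutive integers contained in R(n,•). Suppose that R₁ ⊆ ℤ \ {0} is a set of ℤ-Bohr recurrence and that L_n → ∞ as |n| → ∞ (i.e., for every L ∈ ℕ there is N ∈ ℕ such that every n ∈ R₁ with |n| ≥ N satisfies L_n ≥ L). Then R is a set of ℤ²-Bohr recurrence. -/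
open scoped BigOperators

noncomputable section

lemma torusNorm_le (x : ℝ) (n : ℤ) : torusNorm x ≤ |x - n| := round_le x n

lemma torusNorm_add_le (x y : ℝ) : torusNorm (x + y) ≤ torusNorm x + torusNorm y := by
  calc torusNorm (x + y) ≤ |x + y - ((round x + round y : ℤ) : ℝ)| := torusNorm_le _ _
    _ ≤ torusNorm x + torusNorm y := by
        unfold torusNorm
        push_cast
        have := abs_add_le (x - round x) (y - round y)
        have h : x + y - ((round x : ℝ) + round y) = (x - round x) + (y - round y) := by ring
        rw [h]; exact this

/-- Bohr sets in ℤ are syndetic (finitary pigeonhole form). -/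
lemma bohr_syndetic (k : ℕ) (θ : Fin k → ℝ) {ε : ℝ} (hε : 0 < ε) :
    ∃ D : ℕ, ∀ a : ℤ, ∃ m : ℤ, a ≤ m ∧ m ≤ a + 2 * D ∧ ∀ j, torusNorm ((m : ℝ) * θ j) < ε := by
  classical
  set Q : ℕ := ⌈2 / ε⌉₊ + 1 with hQdef
  have hQpos : (0 : ℝ) < Q := by positivity
  have hQε : 1 / (Q : ℝ) < ε := by
    rw [div_lt_iff₀ hQpos]
    have h1 : 2 / ε ≤ (⌈2 / ε⌉₊ : ℝ) := Nat.le_ceil _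
    have h2 : ((⌈2 / ε⌉₊ : ℝ)) < Q := by
      rw [hQdef]; push_cast; linarith
    have h3 : 2 / ε < (Q : ℝ) := lt_of_le_of_lt h1 h2
    have h4 : 2 / ε * ε < (Q : ℝ) * ε := by exact (mul_lt_mul_of_pos_right h3 hε)
    rw [div_mul_cancel₀ 2 (ne_of_gt hε)] at h4
    nlinarith [mul_pos hQpos hε]
  -- cell map
  have cellmem : ∀ (c : ℤ) (j : Fin k), (⌊(Q : ℝ) * Int.fract ((c : ℝ) * θ j)⌋).toNat < Q := by
    intro c j
    have h0 : (0:ℤ) ≤ ⌊(Q : ℝ) * Int.fract ((c : ℝ) * θ j)⌋ := by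
      apply Int.floor_nonneg.mpr
      have := Int.fract_nonneg ((c : ℝ) * θ j)
      positivity
    have h1 : ⌊(Q : ℝ) * Int.fract ((c : ℝ) * θ j)⌋ < (Q : ℤ) := by
      apply Int.floor_lt.mpr
      push_cast
      have := Int.fract_lt_one ((c : ℝ) * θ j)
      nlinarith
    omega
  let g : ℤ → (Fin k → Fin Q) := fun c j => ⟨(⌊(Q : ℝ) * Int.fract ((c : ℝ) * θ j)⌋).toNat, cellmem c j⟩
  let pick : (Fin k → Fin Q) → ℤ := fun v => if h : ∃ c : ℤ, g c = v then h.choose else 0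
  let D : ℕ := Finset.univ.sup (fun v : Fin k → Fin Q => (pick v).natAbs)
  refine ⟨D, fun a => ?_⟩
  set c : ℤ := a + D with hc
  have hex : ∃ c' : ℤ, g c' = g (-c) := ⟨-c, rfl⟩
  set d : ℤ := pick (g (-c)) with hd
  have hgd : g d = g (-c) := by
    rw [hd]; simp only [pick, dif_pos hex]; exact hex.choose_spec
  have hdD : d.natAbs ≤ D := by
    rw [hd]
    exact Finset.le_sup (f := fun v : Fin k → Fin Q => (pick v).natAbs) (Finset.mem_univ (g (-c)))
  have habs : |d| ≤ (D : ℤ) := by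
    rw [Int.abs_eq_natAbs]; exact_mod_cast hdD
  obtain ⟨hdlo, hdhi⟩ := abs_le.mp habs
  refine ⟨c + d, by omega, by omega, ?_⟩
  intro j
  -- same cell ⇒ fract difference small
  have hfloor : ⌊(Q : ℝ) * Int.fract ((d : ℝ) * θ j)⌋ = ⌊(Q : ℝ) * Int.fract (((-c : ℤ) : ℝ) * θ j)⌋ := by
    have h : (⌊(Q : ℝ) * Int.fract ((d : ℝ) * θ j)⌋).toNat
        = (⌊(Q : ℝ) * Int.fract (((-c : ℤ) : ℝ) * θ j)⌋).toNat :=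
      congrArg Fin.val (congrFun hgd j)
    have h0 : (0:ℤ) ≤ ⌊(Q : ℝ) * Int.fract ((d : ℝ) * θ j)⌋ := by
      apply Int.floor_nonneg.mpr
      have := Int.fract_nonneg ((d : ℝ) * θ j); positivity
    have h0' : (0:ℤ) ≤ ⌊(Q : ℝ) * Int.fract (((-c : ℤ) : ℝ) * θ j)⌋ := by
      apply Int.floor_nonneg.mpr
      have := Int.fract_nonneg (((-c : ℤ) : ℝ) * θ j); positivity
    omega
  have hsmall : |Int.fract ((d : ℝ) * θ j) - Int.fract (((-c : ℤ) : ℝ) * θ j)| < 1 / Q := by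
    set u := Int.fract ((d : ℝ) * θ j)
    set v := Int.fract (((-c : ℤ) : ℝ) * θ j)
    have h1 : (⌊(Q:ℝ) * u⌋ : ℝ) ≤ (Q:ℝ) * u := Int.floor_le _
    have h2 : (Q:ℝ) * u < ⌊(Q:ℝ) * u⌋ + 1 := Int.lt_floor_add_one _
    have h3 : (⌊(Q:ℝ) * v⌋ : ℝ) ≤ (Q:ℝ) * v := Int.floor_le _
    have h4 : (Q:ℝ) * v < ⌊(Q:ℝ) * v⌋ + 1 := Int.lt_floor_add_one _
    rw [hfloor] at h1 h2
    have A : (Q:ℝ) * (u - v) < 1 := by linarith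
    have B : (Q:ℝ) * (v - u) < 1 := by linarith
    rw [abs_lt]
    constructor
    · have h5 : v - u < 1 / Q := (lt_div_iff₀ hQpos).mpr (by nlinarith)
      linarith
    · exact (lt_div_iff₀ hQpos).mpr (by nlinarith)
  calc torusNorm (((c + d : ℤ) : ℝ) * θ j)
      ≤ |((c + d : ℤ) : ℝ) * θ j - ((⌊(d : ℝ) * θ j⌋ - ⌊((-c : ℤ) : ℝ) * θ j⌋ : ℤ) : ℝ)| :=
        torusNorm_le _ _
    _ = |Int.fract ((d : ℝ) * θ j) - Int.fract (((-c : ℤ) : ℝ) * θ j)| := by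
        congr 1
        rw [Int.fract, Int.fract]
        push_cast
        ring
    _ < 1 / Q := hsmall
    _ < ε := hQε

/-- If the projection `R₁` of `R ⊆ ℤ²` to the first coordinate is a set of `ℤ`-Bohr
recurrence avoiding `0`, and the fibers `R(n,•)` contain arbitrarily long intervals of
consecutive integers as `|n| → ∞`, then `R` is a set of `ℤ²`-Bohr recurrence. -/
theorem long_fibers_give_bohr_recurrence
    (R : Set (Fin 2 → ℤ))
    (hR1sub : ∀ n : ℤ, (∃ m : ℤ, ![n, m] ∈ R) → n ≠ 0)
    (hR1 : IsBohrRecurrenceZ {n : ℤ | ∃ m : ℤ, ![n, m] ∈ R})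
    (hlen : ∀ L : ℕ, ∃ N : ℕ, ∀ n : ℤ, (∃ m : ℤ, ![n, m] ∈ R) → (N : ℤ) ≤ |n| →
      ∃ a : ℤ, ∀ j : ℤ, a ≤ j → j < a + (L : ℤ) → ![n, j] ∈ R) :
    IsBohrRecurrence 2 R := by
  intro V hV
  obtain ⟨k, hk, α, ε, hε, hVmem⟩ := hV
  have hε2 : 0 < ε / 2 := by linarith
  obtain ⟨D, hD⟩ := bohr_syndetic k (fun j => α j 1) hε2
  obtain ⟨N, hN⟩ := hlen (2 * D + 1)
  set P : ℕ := N + 1 with hP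
  have hPpos : (0:ℝ) < P := by positivity
  -- the Bohr₀ set in ℤ
  set ε' : ℝ := min (ε / 2) (1 / (2 * P)) with hε'
  have hε'pos : 0 < ε' := by
    apply lt_min hε2; positivity
  set W : Set ℤ := {n : ℤ | (∀ j : Fin k, torusNorm ((n : ℝ) * α j 0) < ε / 2) ∧ (P : ℤ) ∣ n}
    with hW
  have hWBohr : IsBohr0Z W := by
    refine ⟨k + 1, by omega, Fin.cons (1 / (P : ℝ)) (fun j => α j 0), ε', hε'pos, ?_⟩
    intro n hn
    constructor
    · intro j
      have := hn j.succ
      rw [Fin.cons_succ] at this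
      exact lt_of_lt_of_le this (min_le_left _ _)
    · have h0 := hn 0
      rw [Fin.cons_zero] at h0
      have h0' : torusNorm ((n : ℝ) * (1 / P)) < 1 / (2 * P) :=
        lt_of_lt_of_le h0 (min_le_right _ _)
      -- deduce P ∣ n
      set q : ℤ := round ((n : ℝ) * (1 / P)) with hq
      have hqq : |(n : ℝ) * (1 / P) - q| < 1 / (2 * P) := h0'
      have hr : |(n : ℝ) - q * P| < 1 / 2 := by
        have e1 : ((n : ℝ) * (1 / P) - q) * P = (n : ℝ) - q * P := by field_simp
        have e2 : |(n : ℝ) - q * P| = |(n : ℝ) * (1 / P) - q| * P := by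
          rw [← e1, abs_mul, abs_of_pos hPpos]
        have e3 : 1 / (2 * (P : ℝ)) * P = 1 / 2 := by field_simp
        rw [e2]
        calc |(n : ℝ) * (1 / P) - q| * P < 1 / (2 * P) * P :=
              mul_lt_mul_of_pos_right hqq hPpos
          _ = 1 / 2 := e3
      have : ((n - q * P : ℤ) : ℝ) = (n : ℝ) - q * P := by push_cast; ring
      have hint : |((n - q * P : ℤ) : ℝ)| < 1 / 2 := by rw [this]; exact hr
      have hz : n - q * P = 0 := by
        by_contra hne
        have h1 : (1 : ℤ) ≤ |n - q * P| := Int.one_le_abs hne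
        have h1' : (1 : ℝ) ≤ |((n - q * P : ℤ) : ℝ)| := by
          rw [← Int.cast_abs]; exact_mod_cast h1
        linarith
      exact ⟨q, by rw [mul_comm]; omega⟩
  obtain ⟨n, hnR1, hnβ, hPn⟩ := hR1 W hWBohr
  have hn0 : n ≠ 0 := hR1sub n hnR1
  have hnN : (N : ℤ) ≤ |n| := by
    obtain ⟨q, rfl⟩ := hPn
    have hq0 : q ≠ 0 := by
      intro h; rw [h, mul_zero] at hn0; exact hn0 rfl
    have hq1 : 1 ≤ |q| := Int.one_le_abs hq0
    have hPQ : (P : ℤ) ≤ |(P : ℤ) * q| := by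
      rw [abs_mul, abs_of_nonneg (by positivity : (0:ℤ) ≤ (P:ℤ))]
      nlinarith
    have hPN : ((P : ℕ) : ℤ) = (N : ℤ) + 1 := by rw [hP]; push_cast; ring
    linarith
  obtain ⟨a, ha⟩ := hN n hnR1 hnN
  obtain ⟨m, hma, hmb, hmθ⟩ := hD a
  refine ⟨![n, m], ha m hma (by push_cast; omega), hVmem _ ?_⟩
  intro j
  have hsum : ∑ i : Fin 2, ((![n, m] i : ℤ) : ℝ) * α j i
      = (n : ℝ) * α j 0 + (m : ℝ) * α j 1 := by
    rw [Fin.sum_univ_two]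
    simp
  rw [hsum]
  calc torusNorm ((n : ℝ) * α j 0 + (m : ℝ) * α j 1)
      ≤ torusNorm ((n : ℝ) * α j 0) + torusNorm ((m : ℝ) * α j 1) := torusNorm_add_le _ _
    _ < ε / 2 + ε / 2 := add_lt_add (hnβ j) (hmθ j)
    _ = ε := by ring
end
end

section
/- The set R = {(n₁, n₂) ∈ ℤ² : n₁ ≥ 1 and n₁² ≤ n₂ ≤ 2n₁²} is a set of ℤ²-Bohr recurrence. -/
open scoped BigOperators

noncomputable section

namespace ParabolaAux

lemma torusNorm_eq (x : ℝ) : torusNorm x = ‖(↑x : AddCircle (1 : ℝ))‖ := by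
  rw [AddCircle.norm_eq]
  simp [torusNorm]

lemma torusNorm_add_le (a b : ℝ) : torusNorm (a + b) ≤ torusNorm a + torusNorm b := by
  simp only [torusNorm_eq, AddCircle.coe_add]
  exact norm_add_le _ _

variable {k : ℕ}

/-- The orbit map `m ↦ (m γ₁, …, m γ_k)` into the torus. -/
def phi (γ : Fin k → ℝ) (m : ℕ) : Fin k → AddCircle (1 : ℝ) :=
  fun j => ((m : ℝ) * γ j : ℝ)

lemma phi_add (γ : Fin k → ℝ) (a b : ℕ) : phi γ (a + b) = phi γ a + phi γ b := by
  funext j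
  have h : ((a + b : ℕ) : ℝ) * γ j = (a : ℝ) * γ j + (b : ℝ) * γ j := by push_cast; ring
  simp only [phi, Pi.add_apply]
  rw [h, AddCircle.coe_add]

lemma torusNorm_lt_of_dist (γ : Fin k → ℝ) {a b : ℕ} {δ : ℝ}
    (h : dist (phi γ (a + b)) (phi γ a) < δ) (j : Fin k) :
    torusNorm ((b : ℝ) * γ j) < δ := by
  have h1 : dist (phi γ (a + b) j) (phi γ a j) < δ :=
    lt_of_le_of_lt (dist_le_pi_dist _ _ j) h
  rw [dist_eq_norm] at h1
  have h2 : phi γ (a + b) j - phi γ a j = phi γ b j := by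
    rw [phi_add]; simp
  rw [h2] at h1
  rw [torusNorm_eq]
  exact h1

/-- Pigeonhole: arbitrarily large simultaneous return times. -/
lemma exists_large_return (γ : Fin k → ℝ) {δ : ℝ} (hδ : 0 < δ) (M : ℕ) (hM : 1 ≤ M) :
    ∃ m : ℕ, M ≤ m ∧ ∀ j, torusNorm ((m : ℝ) * γ j) < δ := by
  obtain ⟨a, -, ψ, hψ, hconv⟩ :=
    isCompact_univ.tendsto_subseq (x := fun t : ℕ => phi γ (t * M)) (fun t => Set.mem_univ _)
  rw [Metric.tendsto_atTop] at hconv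
  obtain ⟨N, hN⟩ := hconv (δ / 2) (half_pos hδ)
  have h1 := hN N le_rfl
  have h2 := hN (N + 1) (Nat.le_succ N)
  have hlt : ψ N < ψ (N + 1) := hψ (Nat.lt_succ_self N)
  set m : ℕ := (ψ (N + 1) - ψ N) * M with hm
  have hsum : ψ N * M + m = ψ (N + 1) * M := by
    rw [hm, ← Nat.add_mul, Nat.add_sub_cancel' hlt.le]
  have hdist : dist (phi γ (ψ N * M + m)) (phi γ (ψ N * M)) < δ := by
    rw [hsum]
    calc dist (phi γ (ψ (N+1) * M)) (phi γ (ψ N * M))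
        ≤ dist (phi γ (ψ (N+1) * M)) a + dist (phi γ (ψ N * M)) a := dist_triangle_right _ _ _
      _ < δ / 2 + δ / 2 := by
          exact add_lt_add h2 h1
      _ = δ := add_halves δ
  refine ⟨m, ?_, fun j => torusNorm_lt_of_dist γ hdist j⟩
  calc M = 1 * M := (one_mul M).symm
    _ ≤ (ψ (N + 1) - ψ N) * M := Nat.mul_le_mul_right M (by omega)

/-- Uniform syndeticity of Bohr sets: a window length `P` that works for every start `M`. -/
lemma syndetic (γ : Fin k → ℝ) {δ : ℝ} (hδ : 0 < δ) :
    ∃ P : ℕ, ∀ M : ℕ, 1 ≤ M → ∃ r ≤ P, ∀ j, torusNorm (((M + r : ℕ) : ℝ) * γ j) < δ := by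
  have hcov : closure (Set.range (phi γ)) ⊆ ⋃ r : ℕ, Metric.ball (phi γ r) δ := by
    intro y hy
    obtain ⟨s, hs, hd⟩ := Metric.mem_closure_iff.mp hy δ hδ
    obtain ⟨r, rfl⟩ := hs
    exact Set.mem_iUnion.mpr ⟨r, Metric.mem_ball.mpr hd⟩
  obtain ⟨t, ht⟩ := isClosed_closure.isCompact.elim_finite_subcover
    (fun r : ℕ => Metric.ball (phi γ r) δ) (fun r => Metric.isOpen_ball) hcov
  refine ⟨t.sup id, fun M hM => ?_⟩
  have hmem : -phi γ M ∈ closure (Set.range (phi γ)) := by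
    rw [Metric.mem_closure_iff]
    intro δ' hδ'
    obtain ⟨m, hmM, hm⟩ := exists_large_return γ hδ' M hM
    refine ⟨phi γ (m - M), ⟨m - M, rfl⟩, ?_⟩
    have heq : -phi γ M - phi γ (m - M) = -phi γ m := by
      have h' : phi γ M + phi γ (m - M) = phi γ m := by
        rw [← phi_add, Nat.add_sub_cancel' hmM]
      rw [← h']
      abel
    rw [dist_eq_norm, heq, norm_neg]
    rw [pi_norm_lt_iff hδ']
    intro j
    rw [show phi γ m j = ((((m : ℕ) : ℝ) * γ j : ℝ) : AddCircle (1:ℝ)) from rfl, ← torusNorm_eq]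
    exact hm j
  obtain ⟨r, hrt, hball⟩ := Set.mem_iUnion₂.mp (ht hmem)
  refine ⟨r, Finset.le_sup (f := id) hrt, fun j => ?_⟩
  have h1 : dist ((-phi γ M) j) (phi γ r j) < δ :=
    lt_of_le_of_lt (dist_le_pi_dist (-phi γ M) (phi γ r) j) (Metric.mem_ball.mp hball)
  rw [dist_eq_norm, Pi.neg_apply] at h1
  have h2 : -phi γ M j - phi γ r j = -(phi γ (M + r) j) := by
    rw [phi_add, Pi.add_apply]; abel
  rw [h2, norm_neg] at h1
  rw [show phi γ (M + r) j = ((((M + r : ℕ) : ℝ) * γ j : ℝ) : AddCircle (1:ℝ)) from rfl,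
    ← torusNorm_eq] at h1
  exact h1

end ParabolaAux

/-- The set `{(n₁, n₂) ∈ ℤ² : n₁ ≥ 1, n₁² ≤ n₂ ≤ 2n₁²}` is a set of `ℤ²`-Bohr
recurrence. -/
theorem parabola_strip_bohr_recurrence :
    IsBohrRecurrence 2
      {n : Fin 2 → ℤ | 1 ≤ n 0 ∧ (n 0) ^ 2 ≤ n 1 ∧ n 1 ≤ 2 * (n 0) ^ 2} := by
  intro V hV
  obtain ⟨k, hk, α, ε, hε, hmemV⟩ := hV
  set β : Fin k → ℝ := fun j => α j 0 with hβ
  set γ : Fin k → ℝ := fun j => α j 1 with hγ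
  obtain ⟨P, hP⟩ := ParabolaAux.syndetic γ (half_pos hε)
  obtain ⟨n, hn, hnβ⟩ :=
    ParabolaAux.exists_large_return β (half_pos hε) (P + 1) (Nat.le_add_left 1 P)
  have hn1 : 1 ≤ n := le_trans (Nat.le_add_left 1 P) hn
  obtain ⟨r, hrP, hmγ⟩ := hP (n ^ 2) (Nat.one_le_pow 2 n hn1)
  have hrn2 : r ≤ n ^ 2 := by
    calc r ≤ P := hrP
      _ ≤ n := by omega
      _ ≤ n ^ 2 := Nat.le_self_pow two_ne_zero n
  refine ⟨![(n : ℤ), ((n ^ 2 + r : ℕ) : ℤ)], ⟨?_, ?_, ?_⟩, hmemV _ ?_⟩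
  · simpa using (by exact_mod_cast hn1 : (1 : ℤ) ≤ (n : ℤ))
  · show ((![(n : ℤ), ((n ^ 2 + r : ℕ) : ℤ)]) 0) ^ 2 ≤ (![(n : ℤ), ((n ^ 2 + r : ℕ) : ℤ)]) 1
    simp only [Matrix.cons_val_zero, Matrix.cons_val_one, Matrix.head_cons]
    push_cast
    nlinarith [Nat.cast_nonneg (α := ℤ) r]
  · show (![(n : ℤ), ((n ^ 2 + r : ℕ) : ℤ)]) 1 ≤ 2 * ((![(n : ℤ), ((n ^ 2 + r : ℕ) : ℤ)]) 0) ^ 2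
    simp only [Matrix.cons_val_zero, Matrix.cons_val_one, Matrix.head_cons]
    have : (r : ℤ) ≤ ((n : ℤ)) ^ 2 := by exact_mod_cast hrn2
    push_cast
    nlinarith
  · intro j
    rw [Fin.sum_univ_two]
    simp only [Matrix.cons_val_zero, Matrix.cons_val_one, Matrix.head_cons]
    have h1 : torusNorm ((n : ℝ) * β j) < ε / 2 := hnβ j
    have h2 : torusNorm (((n ^ 2 + r : ℕ) : ℝ) * γ j) < ε / 2 := hmγ j
    have key : torusNorm ((n : ℝ) * α j 0 + ((n ^ 2 + r : ℕ) : ℝ) * α j 1) < ε := by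
      calc torusNorm ((n : ℝ) * α j 0 + ((n ^ 2 + r : ℕ) : ℝ) * α j 1)
          ≤ torusNorm ((n : ℝ) * α j 0) + torusNorm (((n ^ 2 + r : ℕ) : ℝ) * α j 1) :=
            ParabolaAux.torusNorm_add_le _ _
        _ < ε / 2 + ε / 2 := add_lt_add h1 h2
        _ = ε := add_halves ε
    convert key using 3 <;> push_cast <;> ring
end
end

section
/- Let R ⊆ ℤ^d be an essential and ordered set of ℤ^d-Bohr recurrence, let I ⊆ {(i,j) ∈ {1,…,d}² : j ≥ i}, and let Q = (Q_{i,j})_{(i,j)∈I} ∈ [−1,1]^I be a vector of I-Bohr correlations for R. Then there exists a vector of Bohr correlations P ∈ 𝓑𝓒(R) that extends Q, i.e., P_{i,j} = Q_{i,j} for all (i,j) ∈ I. In particular, taking I = ∅, the set 𝓑𝓒(R) is nonempty. -/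
open scoped BigOperators

noncomputable section

/-- `R` is ordered: every `n ∈ R` satisfies `|n₁| ≥ |n₂| ≥ … ≥ |n_d|`. -/
def IsOrderedSet {d : ℕ} (R : Set (Fin d → ℤ)) : Prop :=
  ∀ n ∈ R, ∀ i j : Fin d, i ≤ j → |n j| ≤ |n i|

/-- `Q` is a vector of `I`-Bohr correlations for `R`: it has entries in `[-1,1]` on `I`
and for every `ε > 0` the set `R_{Q,I,ε}` is a set of `ℤ^d`-Bohr recurrence. -/
def IsIBohrCorrVec {d : ℕ} (R : Set (Fin d → ℤ)) (I : Set (Fin d × Fin d))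
    (Q : Fin d → Fin d → ℝ) : Prop :=
  (∀ p ∈ I, Q p.1 p.2 ∈ Set.Icc (-1 : ℝ) 1) ∧
  ∀ ε : ℝ, 0 < ε → IsBohrRecurrence d
    {n ∈ R | ∀ p ∈ I, |(n p.2 : ℝ) / (n p.1 : ℝ) - Q p.1 p.2| ≤ ε}

lemma isBohr0_univ (d : ℕ) : IsBohr0 d Set.univ :=
  ⟨1, le_rfl, fun _ _ => 0, 1, one_pos, fun _ _ => Set.mem_univ _⟩

lemma isBohr0_biInter {d : ℕ} {ι : Type*} [DecidableEq ι] (t : Finset ι)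
    (V : ι → Set (Fin d → ℤ)) (h : ∀ c ∈ t, IsBohr0 d (V c)) :
    IsBohr0 d (⋂ c ∈ t, V c) := by
  induction t using Finset.induction with
  | empty => simpa using isBohr0_univ d
  | @insert a s ha ih =>
    rw [Finset.set_biInter_insert]
    exact (h a (Finset.mem_insert_self a s)).inter
      (ih fun c hc => h c (Finset.mem_insert_of_mem hc))

lemma step_lemma {d : ℕ} {R : Set (Fin d → ℤ)} (hEss : IsEssential R) (hOrd : IsOrderedSet R)
    (I' : Set (Fin d × Fin d)) (Q : Fin d → Fin d → ℝ) (hQ : IsIBohrCorrVec R I' Q)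
    (i j : Fin d) (hij : i ≤ j) :
    ∃ Q' : Fin d → Fin d → ℝ, IsIBohrCorrVec R (insert (i, j) I') Q' ∧
      ∀ q ∈ I', Q' q.1 q.2 = Q q.1 q.2 := by
  classical
  by_cases hmem : (i, j) ∈ I'
  · exact ⟨Q, by rwa [Set.insert_eq_self.mpr hmem], fun q _ => rfl⟩
  set upd : ℝ → Fin d → Fin d → ℝ := fun c a b => if a = i ∧ b = j then c else Q a b with hupd
  have hupd_ij : ∀ c, upd c i j = c := fun c => if_pos ⟨rfl, rfl⟩
  have hupd_ne : ∀ c, ∀ q ∈ I', upd c q.1 q.2 = Q q.1 q.2 := by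
    intro c q hq
    have hne : ¬(q.1 = i ∧ q.2 = j) := by
      rintro ⟨h1, h2⟩
      apply hmem
      have : q = (i, j) := Prod.ext h1 h2
      rwa [this] at hq
    exact if_neg hne
  have key : ∃ c ∈ Set.Icc (-1 : ℝ) 1, ∀ ε : ℝ, 0 < ε → IsBohrRecurrence d
      {n ∈ R | ∀ p ∈ insert (i, j) I',
        |(n p.2 : ℝ) / (n p.1 : ℝ) - upd c p.1 p.2| ≤ ε} := by
    by_contra hcon
    push_neg at hcon
    have hcon' : ∀ c : (Set.Icc (-1 : ℝ) 1), ∃ ε > 0, ∃ V, IsBohr0 d V ∧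
        ({n ∈ R | ∀ p ∈ insert (i, j) I',
          |(n p.2 : ℝ) / (n p.1 : ℝ) - upd (c : ℝ) p.1 p.2| ≤ ε} ∩ V) = ∅ := by
      intro c
      have h1 := hcon c c.2
      obtain ⟨ε, hε, hnb⟩ := h1
      rw [IsBohrRecurrence] at hnb
      push_neg at hnb
      obtain ⟨V, hVB, hVne⟩ := hnb
      exact ⟨ε, hε, V, hVB, hVne⟩
    choose ε hε V hVB hVe using hcon'
    have hcover : Set.Icc (-1 : ℝ) 1 ⊆
        ⋃ c : (Set.Icc (-1 : ℝ) 1), Metric.ball (c : ℝ) (ε c / 2) := by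
      intro x hx
      exact Set.mem_iUnion.mpr ⟨⟨x, hx⟩, Metric.mem_ball_self (half_pos (hε _))⟩
    obtain ⟨t, ht⟩ := isCompact_Icc.elim_finite_subcover _
      (fun c => Metric.isOpen_ball) hcover
    have htne : t.Nonempty := by
      obtain ⟨c, hct, -⟩ := Set.mem_iUnion₂.mp (ht (by norm_num : (-1 : ℝ) ∈ Set.Icc (-1 : ℝ) 1))
      exact ⟨c, hct⟩
    set ε0 : ℝ := t.inf' htne (fun c => ε c / 2) with hε0def
    have hε0 : 0 < ε0 := by
      rw [hε0def, Finset.lt_inf'_iff]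
      exact fun c _ => half_pos (hε c)
    have hV0 : IsBohr0 d (⋂ c ∈ t, V c) := isBohr0_biInter t V fun c _ => hVB c
    obtain ⟨n, hnmem, hnV0⟩ := hQ.2 ε0 hε0 _ hV0
    have hnR : n ∈ R := hnmem.1
    have hnI := hnmem.2
    have hni : ((n i : ℝ)) ≠ 0 := by exact_mod_cast hEss n hnR i
    have habs : |(n j : ℝ)| ≤ |(n i : ℝ)| := by exact_mod_cast hOrd n hnR i j hij
    have hr : (n j : ℝ) / (n i : ℝ) ∈ Set.Icc (-1 : ℝ) 1 := by
      rw [Set.mem_Icc, ← abs_le, abs_div]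
      exact (div_le_one (abs_pos.mpr hni)).mpr habs
    obtain ⟨c, hct, hrc⟩ := Set.mem_iUnion₂.mp (ht hr)
    rw [Metric.mem_ball, Real.dist_eq] at hrc
    have hε0le : ε0 ≤ ε c := by
      have := Finset.inf'_le (fun c => ε c / 2) hct
      have h2 := hε c
      simp only [← hε0def] at this
      linarith
    have hn2 : n ∈ {m ∈ R | ∀ p ∈ insert (i, j) I',
        |(m p.2 : ℝ) / (m p.1 : ℝ) - upd (c : ℝ) p.1 p.2| ≤ ε c} := by
      refine ⟨hnR, fun p hp => ?_⟩
      rcases hp with hp | hp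
      · subst hp
        rw [hupd_ij]
        show |(n j : ℝ) / (n i : ℝ) - (c : ℝ)| ≤ ε c
        have h2 := hε c
        linarith
      · rw [hupd_ne (c : ℝ) p hp]
        exact (hnI p hp).trans hε0le
    have : n ∈ ({m ∈ R | ∀ p ∈ insert (i, j) I',
        |(m p.2 : ℝ) / (m p.1 : ℝ) - upd (c : ℝ) p.1 p.2| ≤ ε c} ∩ V c) :=
      ⟨hn2, Set.mem_iInter₂.mp hnV0 c hct⟩
    rw [hVe c] at this
    exact this
  obtain ⟨c, hc, hgood⟩ := key
  refine ⟨upd c, ⟨?_, hgood⟩, hupd_ne c⟩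
  intro p hp
  rcases hp with hp | hp
  · subst hp; rw [hupd_ij]; exact hc
  · rw [hupd_ne c p hp]; exact hQ.1 p hp

lemma extend_finset {d : ℕ} {R : Set (Fin d → ℤ)} (hEss : IsEssential R)
    (hOrd : IsOrderedSet R) :
    ∀ T : Finset (Fin d × Fin d), (∀ p ∈ T, p.1 ≤ p.2) →
    ∀ (I : Set (Fin d × Fin d)) (Q : Fin d → Fin d → ℝ), IsIBohrCorrVec R I Q →
    ∃ P : Fin d → Fin d → ℝ, IsIBohrCorrVec R (I ∪ ↑T) P ∧
      ∀ p ∈ I, P p.1 p.2 = Q p.1 p.2 := by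
  classical
  intro T
  induction T using Finset.induction with
  | empty => intro _ I Q hQ; exact ⟨Q, by simpa using hQ, fun _ _ => rfl⟩
  | @insert a s ha ih =>
    intro hT I Q hQ
    obtain ⟨P, hP, hPQ⟩ := ih (fun p hp => hT p (Finset.mem_insert_of_mem hp)) I Q hQ
    obtain ⟨P', hP', hP'P⟩ := step_lemma hEss hOrd (I ∪ ↑s) P hP a.1 a.2
      (hT a (Finset.mem_insert_self a s))
    refine ⟨P', ?_, fun p hp => (hP'P p (Or.inl hp)).trans (hPQ p hp)⟩
    have hset : insert ((a.1, a.2)) (I ∪ (↑s : Set (Fin d × Fin d))) = I ∪ ↑(insert a s) := by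
      rw [Finset.coe_insert, Prod.mk.eta]
      ext x
      simp [Set.mem_insert_iff, or_assoc]
    rwa [hset] at hP'

/-- Every vector of `I`-Bohr correlations for an essential ordered set of `ℤ^d`-Bohr
recurrence extends to a vector of Bohr correlations (i.e. of `{(i,j) : i ≤ j}`-Bohr
correlations). -/
theorem extension_of_bohr_correlations
    (d : ℕ) (R : Set (Fin d → ℤ))
    (hR : IsBohrRecurrence d R) (hEss : IsEssential R) (hOrd : IsOrderedSet R)
    (I : Set (Fin d × Fin d)) (hI : ∀ p ∈ I, p.1 ≤ p.2)
    (Q : Fin d → Fin d → ℝ) (hQ : IsIBohrCorrVec R I Q) :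
    ∃ P : Fin d → Fin d → ℝ,
      IsIBohrCorrVec R {p : Fin d × Fin d | p.1 ≤ p.2} P ∧
      ∀ p ∈ I, P p.1 p.2 = Q p.1 p.2 := by
  classical
  obtain ⟨P, hP, hPQ⟩ := extend_finset hEss hOrd
    (Finset.univ.filter (fun p : Fin d × Fin d => p.1 ≤ p.2))
    (fun p hp => (Finset.mem_filter.mp hp).2) I Q hQ
  refine ⟨P, ?_, hPQ⟩
  have hset : I ∪ ↑(Finset.univ.filter (fun p : Fin d × Fin d => p.1 ≤ p.2)) =
      {p : Fin d × Fin d | p.1 ≤ p.2} := by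
    ext x
    simp only [Set.mem_union, Finset.coe_filter, Finset.mem_univ, Set.mem_setOf_eq, true_and]
    exact ⟨fun h => h.elim (hI x) id, Or.inr⟩
  rwa [hset] at hP
end
end

section
/- Let R ⊆ ℤ^d be an essential and ordered set of ℤ^d-Bohr recurrence and let P ∈ 𝓑𝓒(R) be a vector of Bohr correlations for R. Then for all i, j, l ∈ {1,…,d} with i ≤ j ≤ l, one has P_{i,l} = P_{i,j} · P_{j,l}. -/
open scoped BigOperators

noncomputable section

/-- `P = (P_{i,j})_{i ≤ j}` (with entries in `[-1,1]`) is a vector of Bohr correlations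
for `R` if for every `ε > 0` the set `R_{P,ε}` is a set of `ℤ^d`-Bohr recurrence. -/
def IsBohrCorrVec {d : ℕ} (R : Set (Fin d → ℤ)) (P : Fin d → Fin d → ℝ) : Prop :=
  (∀ i j : Fin d, i ≤ j → P i j ∈ Set.Icc (-1 : ℝ) 1) ∧
  ∀ ε : ℝ, 0 < ε → IsBohrRecurrence d
    {n ∈ R | ∀ i j : Fin d, i ≤ j → |(n j : ℝ) / (n i : ℝ) - P i j| ≤ ε}

/-- Consistency of Bohr correlations: `P_{i,l} = P_{i,j} · P_{j,l}` for `i ≤ j ≤ l`. -/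
theorem bohr_correlations_consistency
    (d : ℕ) (R : Set (Fin d → ℤ))
    (hR : IsBohrRecurrence d R) (hEss : IsEssential R) (hOrd : IsOrderedSet R)
    (P : Fin d → Fin d → ℝ) (hP : IsBohrCorrVec R P)
    (i j l : Fin d) (hij : i ≤ j) (hjl : j ≤ l) :
    P i l = P i j * P j l := by
  -- `Set.univ` is a Bohr₀ set
  have huniv : IsBohr0 d (Set.univ : Set (Fin d → ℤ)) := by
    refine ⟨1, le_refl 1, fun _ _ => 0, 1, one_pos, fun n _ => Set.mem_univ n⟩
  -- for every ε > 0, the approximation set is nonempty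
  have key : ∀ ε : ℝ, 0 < ε → |P i l - P i j * P j l| ≤ 3 * ε := by
    intro ε hε
    obtain ⟨n, hn, -⟩ := hP.2 ε hε Set.univ huniv
    obtain ⟨hnR, happ⟩ := hn
    have hai : ((n i : ℝ)) ≠ 0 := Int.cast_ne_zero.mpr (hEss n hnR i)
    have haj : ((n j : ℝ)) ≠ 0 := Int.cast_ne_zero.mpr (hEss n hnR j)
    have hba : |(n j : ℝ) / (n i : ℝ)| ≤ 1 := by
      rw [abs_div]
      rw [div_le_one (abs_pos.mpr hai)]
      have := hOrd n hnR i j hij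
      have h2 : |(n j : ℝ)| = ((|n j| : ℤ) : ℝ) := by push_cast; ring
      have h3 : |(n i : ℝ)| = ((|n i| : ℤ) : ℝ) := by push_cast; ring
      rw [h2, h3]; exact_mod_cast this
    have hPjl : |P j l| ≤ 1 := by
      have := hP.1 j l hjl
      exact abs_le.mpr ⟨this.1, this.2⟩
    have hsplit : (n l : ℝ) / (n i : ℝ) = (n j : ℝ) / (n i : ℝ) * ((n l : ℝ) / (n j : ℝ)) := by
      field_simp
    have h1 := happ i l (le_trans hij hjl)
    have h2 := happ i j hij
    have h3 := happ j l hjl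
    calc |P i l - P i j * P j l|
        ≤ |P i l - (n l : ℝ) / (n i : ℝ)| + |(n l : ℝ) / (n i : ℝ) - P i j * P j l| :=
          abs_sub_le _ _ _
      _ ≤ ε + |(n l : ℝ) / (n i : ℝ) - P i j * P j l| := by
          rw [abs_sub_comm] at h1; linarith
      _ ≤ ε + (ε + ε) := by
          have : (n l : ℝ) / (n i : ℝ) - P i j * P j l
              = (n j : ℝ) / (n i : ℝ) * ((n l : ℝ) / (n j : ℝ) - P j l)
                + P j l * ((n j : ℝ) / (n i : ℝ) - P i j) := by
            rw [hsplit]; ring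
          rw [this]
          have hb1 : |(n j : ℝ) / (n i : ℝ) * ((n l : ℝ) / (n j : ℝ) - P j l)| ≤ ε := by
            rw [abs_mul]
            calc |(n j : ℝ) / (n i : ℝ)| * |(n l : ℝ) / (n j : ℝ) - P j l|
                ≤ 1 * ε := mul_le_mul hba h3 (abs_nonneg _) zero_le_one
              _ = ε := one_mul ε
          have hb2 : |P j l * ((n j : ℝ) / (n i : ℝ) - P i j)| ≤ ε := by
            rw [abs_mul]
            calc |P j l| * |(n j : ℝ) / (n i : ℝ) - P i j|
                ≤ 1 * ε := mul_le_mul hPjl h2 (abs_nonneg _) zero_le_one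
              _ = ε := one_mul ε
          have := abs_add_le (n j / (n i:ℝ) * ((n l:ℝ) / (n j:ℝ) - P j l))
            (P j l * ((n j:ℝ) / (n i:ℝ) - P i j))
          linarith
      _ = 3 * ε := by ring
  have : |P i l - P i j * P j l| ≤ 0 := by
    refine le_of_forall_pos_le_add ?_
    intro δ hδ
    have := key (δ / 3) (by linarith)
    linarith
  have := abs_nonneg (P i l - P i j * P j l)
  have h0 : P i l - P i j * P j l = 0 := abs_eq_zero.mp (le_antisymm ‹_› ‹_›)
  linarith
end
end
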